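/- arXiv:1401.4634 — 9 statements merged into one kernel-verified Lean document; each statement's English description precedes it below -/
import Mathlib

section
/- For the end-replication system S^end_k = (Σ, s, T^end_k) with |s| ≥ k ≥ 1, every string in the system has the same alpha-representation as s; consequently cap(S^end_k) ≤ log₂ δ(s). -/
open Filter

noncomputable def cap {A : Type*} (S : Set (List A)) : ℝ :=
  Filter.limsup
    (fun n : ℕ => Real.logb 2 (({x ∈ S | x.length = n} : Set (List A)).ncard) / n)
    Filter.atTop

def Sys {A : Type*} (step : List A → List A → Prop) (s : List A) : Set (List A) :=
  {y | Relation.ReflTransGen step s y}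

def EndStep {A : Type*} (k : ℕ) (x y : List A) : Prop :=
  ∃ u v w : List A, v.length = k ∧ x = u ++ v ++ w ∧ y = u ++ v ++ w ++ v

/-! Appending a copy of a factor introduces no new symbol, so every string of the system is over
the alphabet `R(s)` of its seed. There are at most `δ(s) ^ n` such strings of length `n`, whence the
capacity is at most `log₂ δ(s)`. -/

section Alphabet

variable {A : Type*} [DecidableEq A]

theorem EndStep.toFinset_eq {k : ℕ} {x y : List A} (h : EndStep k x y) :
    y.toFinset = x.toFinset := by
  obtain ⟨u, v, w, -, rfl, rfl⟩ := h
  simp only [List.toFinset_append]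
  ext a
  simp only [Finset.mem_union]
  tauto

theorem toFinset_eq_of_mem_sys_endStep {k : ℕ} {s x : List A} (hx : x ∈ Sys (EndStep k) s) :
    x.toFinset = s.toFinset := by
  induction hx with
  | refl => rfl
  | tail _ hstep ih => exact hstep.toFinset_eq.trans ih

end Alphabet

section Capacity

variable {A : Type*}

theorem logb_two_natCast_nonneg (n : ℕ) : 0 ≤ Real.logb 2 n :=
  div_nonneg (Real.log_natCast_nonneg n) (Real.log_nonneg one_le_two)

theorem ncard_setOf_length_eq_le_pow {S : Set (List A)} {B : Finset A}
    (hS : ∀ x ∈ S, ∀ a ∈ x, a ∈ B) (n : ℕ) :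
    ({x ∈ S | x.length = n} : Set (List A)).ncard ≤ B.card ^ n := by
  classical
  calc ({x ∈ S | x.length = n} : Set (List A)).ncard
      ≤ ((Finset.univ : Finset (Fin n → B)).image fun f => List.ofFn fun i => (f i : A)).card := by
        rw [← Set.ncard_coe_finset]
        refine Set.ncard_le_ncard ?_ (Finset.finite_toSet _)
        rintro x ⟨hx, rfl⟩
        simp only [Finset.coe_image, Finset.coe_univ, Set.image_univ, Set.mem_range]
        exact ⟨fun i => ⟨x.get i, hS x hx _ (List.get_mem _ _)⟩, List.ofFn_get x⟩
    _ ≤ (Finset.univ : Finset (Fin n → B)).card := Finset.card_image_le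
    _ = B.card ^ n := by simp

theorem cap_le_logb_of_ncard_le_pow {S : Set (List A)} {d : ℕ}
    (h : ∀ n, ({x ∈ S | x.length = n} : Set (List A)).ncard ≤ d ^ n) :
    cap S ≤ Real.logb 2 d := by
  have hlog_d : 0 ≤ Real.logb 2 d := logb_two_natCast_nonneg d
  have hlog_count : ∀ n : ℕ,
      Real.logb 2 (({x ∈ S | x.length = n} : Set (List A)).ncard) ≤ n * Real.logb 2 d := by
    intro n
    rcases Nat.eq_zero_or_pos ({x ∈ S | x.length = n} : Set (List A)).ncard with h0 | hpos
    · rw [h0, Nat.cast_zero, Real.logb_zero]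
      positivity
    · rw [← Real.logb_pow]
      exact Real.logb_le_logb_of_le (by norm_num) (by exact_mod_cast hpos) (by exact_mod_cast h n)
  refine limsup_le_of_le (isCoboundedUnder_le_of_le atTop (x := 0) fun n => ?_)
    (.of_forall fun n => ?_)
  · exact div_nonneg (logb_two_natCast_nonneg _) n.cast_nonneg
  · exact div_le_of_le_mul₀ n.cast_nonneg hlog_d ((hlog_count n).trans_eq (mul_comm _ _))

end Capacity

theorem stmt0_general {A : Type*} [DecidableEq A] (k : ℕ)
    (s : List A) :
    (∀ x ∈ Sys (EndStep k) s, x.toFinset = s.toFinset) ∧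
      cap (Sys (EndStep k) s) ≤ Real.logb 2 (s.toFinset.card) := by
  have halphabet : ∀ x ∈ Sys (EndStep k) s, x.toFinset = s.toFinset :=
    fun _ hx => toFinset_eq_of_mem_sys_endStep hx
  refine ⟨halphabet, cap_le_logb_of_ncard_le_pow (ncard_setOf_length_eq_le_pow ?_)⟩
  intro x hx a ha
  rw [← halphabet x hx]
  exact List.mem_toFinset.mpr ha

theorem stmt0 {A : Type*} [Fintype A] [DecidableEq A] (k : ℕ) (hk : 1 ≤ k)
    (s : List A) (hs : k ≤ s.length) :
    (∀ x ∈ Sys (EndStep k) s, x.toFinset = s.toFinset) ∧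
      cap (Sys (EndStep k) s) ≤ Real.logb 2 (s.toFinset.card) :=
  stmt0_general k s
end

section
/- Let Σ be a finite alphabet, k ≥ 1, and s ∈ Σ* with |s| ≥ k. Then for the end-replication system S^end_k = (Σ, s, T^end_k), cap(S^end_k) = log₂ δ(s). -/
open Filter

/-!
Every word reachable from `s` has `s` as a prefix and uses only letters of `s`, so there are at
most `δ(s)ⁿ` of length `n`. Conversely, any word `b :: u` of length `k` can be made to occur:
first make `u` occur as the beginning of a length-`k` window `v`, then reach a word ending in `b`
(by appending a window containing `b` twice and then the rotation of that window that ends in `b`)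
and append `v`. Doing this for all finitely many length-`k` words over the letters of `s` yields a
reachable `x₀` containing all of them, after which every `x₀ ++ w` with `k ∣ |w|` is reachable.
This gives `δ(s)^(n - |x₀|)` reachable words of length `n` for infinitely many `n`.
-/

open List Relation

theorem List.exists_infix_length_eq_of_mem {A : Type*} {k : ℕ} {x : List A} {a : A}
    (ha : a ∈ x) (hk : 0 < k) (hkx : k ≤ x.length) :
    ∃ c d : List A, (c ++ a :: d).length = k ∧ c ++ a :: d <:+: x := by
  obtain ⟨x₁, x₂, rfl⟩ := append_of_mem ha
  simp only [length_append, length_cons] at hkx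
  by_cases h : k - 1 ≤ x₂.length
  · refine ⟨[], x₂.take (k - 1), by simp [min_eq_left h]; omega, ?_⟩
    exact ⟨x₁, x₂.drop (k - 1), by simp⟩
  · refine ⟨x₁.drop (x₁.length - (k - 1 - x₂.length)), x₂, by simp; omega, ?_⟩
    rw [← drop_append_of_le_length (by omega)]
    exact (drop_suffix _ _).isInfix

def wordsOver {A : Type*} (l : List A) (n : ℕ) : Set (List A) :=
  {w | w.length = n ∧ w ⊆ l}

section WordsOver

variable {A : Type*} [DecidableEq A] (l : List A) (n : ℕ)

theorem wordsOver_eq_range :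
    wordsOver l n = Set.range fun f : Fin n → l.toFinset => ofFn fun i => (f i : A) := by
  ext w
  constructor
  · rintro ⟨rfl, hw⟩
    exact ⟨fun i => ⟨w[i], mem_toFinset.2 (hw (getElem_mem _))⟩, ofFn_getElem⟩
  · rintro ⟨f, rfl⟩
    refine ⟨length_ofFn, fun a ha => ?_⟩
    obtain ⟨i, rfl⟩ := mem_ofFn.1 ha
    exact mem_toFinset.1 (f i).2

theorem ncard_wordsOver : (wordsOver l n).ncard = l.toFinset.card ^ n := by
  rw [wordsOver_eq_range, Set.ncard_range_of_injective]
  · rw [Nat.card_fun, Nat.card_fin, Nat.card_eq_fintype_card, Fintype.card_coe]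
  · intro f g h
    funext i
    exact Subtype.val_injective (congrFun (ofFn_inj.1 h) i)

end WordsOver

theorem wordsOver_finite {A : Type*} (l : List A) (n : ℕ) : (wordsOver l n).Finite := by
  classical
  rw [wordsOver_eq_range]
  exact Set.finite_range _

theorem limsup_logb_div_eq_logb {N : ℕ → ℕ} {b : ℕ} (L : ℕ) (hb : 0 < b)
    (hup : ∀ n, N n ≤ b ^ n) (hlow : ∃ᶠ n in atTop, b ^ n ≤ b ^ L * N n) :
    limsup (fun n => Real.logb 2 (N n) / n) atTop = Real.logb 2 b := by
  set c := Real.logb 2 b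
  have hc : 0 ≤ c := Real.logb_nonneg one_lt_two (by exact_mod_cast hb)
  have hlog_nonneg : ∀ n, 0 ≤ Real.logb 2 (N n) := fun n => by
    rcases (N n).eq_zero_or_pos with h | h
    · simp [h]
    · exact Real.logb_nonneg one_lt_two (by exact_mod_cast h)
  have hle : ∀ n, Real.logb 2 (N n) / n ≤ c := fun n => by
    refine div_le_of_le_mul₀ n.cast_nonneg hc ?_
    rcases (N n).eq_zero_or_pos with h | h
    · simp only [h, CharP.cast_eq_zero, Real.logb_zero]
      positivity
    · rw [mul_comm, ← Real.logb_pow]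
      exact Real.logb_le_logb_of_le one_lt_two (by exact_mod_cast h) (by exact_mod_cast hup n)
  have hge : ∃ᶠ n in atTop, c - L * c / n ≤ Real.logb 2 (N n) / n := by
    refine (hlow.and_eventually (eventually_gt_atTop 0)).mono fun n ⟨hn, hpos⟩ => ?_
    have hN : 0 < N n := Nat.pos_of_ne_zero fun h => by
      simp [h, hb.ne'] at hn
    have hlog : n * c ≤ L * c + Real.logb 2 (N n) := by
      rw [← Real.logb_pow, ← Real.logb_pow, ← Real.logb_mul (by positivity) (by positivity)]
      exact Real.logb_le_logb_of_le one_lt_two (by positivity) (by exact_mod_cast hn)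
    have hn' : (0 : ℝ) < n := by exact_mod_cast hpos
    rw [sub_le_iff_le_add, ← add_div, le_div_iff₀ hn']
    field_simp
    linarith
  have htendsto : Tendsto (fun n : ℕ => c - L * c / n) atTop (nhds c) := by
    simpa using tendsto_const_nhds.sub (tendsto_const_div_atTop_nhds_zero_nat (L * c))
  refine le_antisymm (limsup_le_of_le
    (isCoboundedUnder_le_of_le atTop fun n => div_nonneg (hlog_nonneg n) n.cast_nonneg)
    (Eventually.of_forall hle)) (le_of_forall_sub_le fun ε hε => ?_)
  refine le_limsup_of_frequently_le ?_ (isBoundedUnder_of ⟨c, hle⟩)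
  have hε' : c - ε < c := by linarith
  refine (hge.and_eventually (htendsto.eventually (eventually_ge_nhds hε'))).mono ?_
  exact fun n ⟨h₁, h₂⟩ => h₂.trans h₁

namespace EndStep

variable {A : Type*} {k : ℕ} {s x y : List A}

theorem isPrefix (h : EndStep k x y) : x <+: y := by
  obtain ⟨u, v, w, -, rfl, rfl⟩ := h
  exact prefix_append _ _

theorem subset (h : EndStep k x y) : y ⊆ x := by
  obtain ⟨u, v, w, -, rfl, rfl⟩ := h
  exact append_subset.2 ⟨Subset.refl _, (infix_append u v w).subset⟩

theorem of_infix {v : List A} (hv : v <:+: x) (hvk : v.length = k) : EndStep k x (x ++ v) := by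
  obtain ⟨u, w, rfl⟩ := hv
  exact ⟨u, v, w, hvk, rfl, rfl⟩

theorem reflTransGen_isPrefix (h : ReflTransGen (EndStep k) x y) : x <+: y := by
  induction h with
  | refl => exact prefix_rfl
  | tail _ hstep ih => exact ih.trans hstep.isPrefix

theorem reflTransGen_subset (h : ReflTransGen (EndStep k) x y) : y ⊆ x := by
  induction h with
  | refl => exact Subset.refl _
  | tail _ hstep ih => exact Subset.trans hstep.subset ih

theorem exists_reflTransGen_concat {a : A} (ha : a ∈ x) (hk : 0 < k) (hkx : k ≤ x.length) :
    ∃ z, ReflTransGen (EndStep k) x (z ++ [a]) := by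
  obtain ⟨c, d, hlen, hw⟩ := exists_infix_length_eq_of_mem ha hk hkx
  set w := c ++ a :: d
  have hrot : d ++ c ++ [a] <:+: x ++ w ++ w := ⟨x ++ c ++ [a], d, by simp [w]⟩
  have hrotlen : (d ++ c ++ [a]).length = k := by simp [w] at hlen ⊢; omega
  refine ⟨x ++ w ++ w ++ (d ++ c), ?_⟩
  simpa using ((ReflTransGen.single (of_infix hw hlen)).tail
    (of_infix (suffix_append x w).isInfix hlen)).tail (of_infix hrot hrotlen)

theorem exists_reflTransGen_infix_of_isPrefix {u : List A} (hu : u ⊆ x) (hul : u.length ≤ k)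
    (hk : 0 < k) (hkx : k ≤ x.length) :
    ∃ y w, ReflTransGen (EndStep k) x y ∧ w <:+: y ∧ w.length = k ∧ u <+: w := by
  induction u with
  | nil =>
    exact ⟨x, x.take k, .refl, (take_prefix k x).isInfix, length_take_of_le hkx, nil_prefix⟩
  | cons b u ih =>
    rw [length_cons] at hul
    obtain ⟨y, v, hxy, hvy, hv, huv⟩ := ih (cons_subset.1 hu).2 (by omega)
    have hxy' := reflTransGen_isPrefix hxy
    obtain ⟨z, hyz⟩ := exists_reflTransGen_concat (hxy'.subset (hu mem_cons_self)) hk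
      (hkx.trans hxy'.length_le)
    have hvz : v <:+: z ++ [b] := hvy.trans (reflTransGen_isPrefix hyz).isInfix
    refine ⟨z ++ [b] ++ v, (b :: v).take k, hxy.trans (hyz.tail (of_infix hvz hv)), ?_,
      by simp [hv], ?_⟩
    · exact (take_prefix _ _).isInfix.trans ⟨z, [], by simp⟩
    · exact prefix_take_iff.2 ⟨(prefix_cons_inj b).2 huv, by simpa using hul⟩

theorem exists_reflTransGen_infix {t : List A} (ht : t ⊆ x) (htk : t.length = k) (hk : 0 < k)
    (hkx : k ≤ x.length) : ∃ y, ReflTransGen (EndStep k) x y ∧ t <:+: y := by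
  obtain ⟨y, w, hxy, hwy, hw, htw⟩ := exists_reflTransGen_infix_of_isPrefix ht htk.le hk hkx
  exact ⟨y, hxy, htw.eq_of_length (htk.trans hw.symm) ▸ hwy⟩

theorem exists_reflTransGen_forall_infix (ts : List (List A))
    (hts : ∀ t ∈ ts, t ⊆ x ∧ t.length = k) (hk : 0 < k) (hkx : k ≤ x.length) :
    ∃ y, ReflTransGen (EndStep k) x y ∧ ∀ t ∈ ts, t <:+: y := by
  induction ts with
  | nil => exact ⟨x, .refl, by simp⟩
  | cons t ts ih =>
    obtain ⟨y, hxy, hy⟩ := ih fun t' ht' => hts t' (mem_cons_of_mem _ ht')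
    have hxy' := reflTransGen_isPrefix hxy
    obtain ⟨htx, htk⟩ := hts t mem_cons_self
    obtain ⟨y', hyy', hty'⟩ :=
      exists_reflTransGen_infix (Subset.trans htx hxy'.subset) htk hk (hkx.trans hxy'.length_le)
    refine ⟨y', hxy.trans hyy', fun t' ht' => ?_⟩
    rcases mem_cons.1 ht' with rfl | ht'
    · exact hty'
    · exact (hy t' ht').trans (reflTransGen_isPrefix hyy').isInfix

theorem exists_reflTransGen_forall_wordsOver_infix (hk : 0 < k) (hkx : k ≤ x.length) :
    ∃ y, ReflTransGen (EndStep k) x y ∧ ∀ t ∈ wordsOver x k, t <:+: y := by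
  classical
  obtain ⟨y, hxy, hy⟩ := exists_reflTransGen_forall_infix (wordsOver_finite x k).toFinset.toList
    (fun t ht => by simp_all [wordsOver]) hk hkx
  exact ⟨y, hxy, fun t ht => hy t (by simpa using ht)⟩

theorem reflTransGen_append_of_forall_wordsOver_infix {l w : List A} {m : ℕ}
    (hx : ∀ t ∈ wordsOver l k, t <:+: x) (hw : w ∈ wordsOver l (m * k)) :
    ReflTransGen (EndStep k) x (x ++ w) := by
  induction m generalizing x w with
  | zero =>
    obtain ⟨hwlen, -⟩ := hw
    rw [zero_mul, length_eq_zero_iff] at hwlen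
    simpa [hwlen] using ReflTransGen.refl
  | succ m ih =>
    obtain ⟨hwlen, hwl⟩ := hw
    have hhead : w.take k ∈ wordsOver l k :=
      ⟨length_take_of_le (hwlen ▸ Nat.le_mul_of_pos_left k m.succ_pos),
        Subset.trans (take_subset _ _) hwl⟩
    have htail : w.drop k ∈ wordsOver l (m * k) :=
      ⟨by simp [hwlen, add_mul], Subset.trans (drop_subset _ _) hwl⟩
    have := ih (fun t ht => (hx t ht).trans (prefix_append x (w.take k)).isInfix) htail
    rw [append_assoc, take_append_drop] at this
    exact (ReflTransGen.single (of_infix (hx _ hhead) hhead.1)).trans this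

theorem sep_length_eq_subset_wordsOver (n : ℕ) :
    {x ∈ Sys (EndStep k) s | x.length = n} ⊆ wordsOver s n :=
  fun _ ⟨hx, hxn⟩ => ⟨hxn, reflTransGen_subset hx⟩

theorem ncard_length_eq_le [DecidableEq A] (n : ℕ) :
    {x ∈ Sys (EndStep k) s | x.length = n}.ncard ≤ s.toFinset.card ^ n :=
  (Set.ncard_le_ncard (sep_length_eq_subset_wordsOver n)
    (wordsOver_finite s n)).trans_eq (ncard_wordsOver s n)

theorem pow_le_ncard_length_eq [DecidableEq A] {x₀ : List A} (hx₀ : x₀ ∈ Sys (EndStep k) s)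
    (hx₀_infix : ∀ t ∈ wordsOver s k, t <:+: x₀) (m : ℕ) :
    s.toFinset.card ^ (m * k) ≤
      {x ∈ Sys (EndStep k) s | x.length = x₀.length + m * k}.ncard := by
  rw [← ncard_wordsOver, ← Set.ncard_image_of_injective _ (append_right_injective x₀)]
  refine Set.ncard_le_ncard ?_
    ((wordsOver_finite s _).subset (sep_length_eq_subset_wordsOver _))
  rintro - ⟨w, hw, rfl⟩
  exact ⟨ReflTransGen.trans hx₀ (reflTransGen_append_of_forall_wordsOver_infix hx₀_infix hw),
    by simp [hw.1]⟩

end EndStep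

open EndStep in
theorem stmt1_general {A : Type*} [DecidableEq A] (k : ℕ) (hk : 1 ≤ k)
    (s : List A) (hs : k ≤ s.length) :
    cap (Sys (EndStep k) s) = Real.logb 2 (s.toFinset.card) := by
  obtain ⟨x₀, hx₀, hx₀_infix⟩ := exists_reflTransGen_forall_wordsOver_infix hk hs
  have hδ : 0 < s.toFinset.card :=
    Finset.card_pos.2 ((toFinset_nonempty_iff s).2 (ne_nil_of_length_pos (by omega)))
  refine limsup_logb_div_eq_logb x₀.length hδ ncard_length_eq_le ?_
  refine frequently_atTop.2 fun m =>
    ⟨x₀.length + m * k, le_add_left (Nat.le_mul_of_pos_right m hk), ?_⟩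
  rw [pow_add]
  exact Nat.mul_le_mul_left _ (pow_le_ncard_length_eq hx₀ hx₀_infix m)

theorem stmt1 {A : Type*} [Fintype A] [DecidableEq A] (k : ℕ) (hk : 1 ≤ k)
    (s : List A) (hs : k ≤ s.length) :
    cap (Sys (EndStep k) s) = Real.logb 2 (s.toFinset.card) :=
  stmt1_general k hk s hs
end

section
/- Let x ∈ Σ* with |x| ≥ k and let w ∈ Σ^k satisfy R(w) ⊆ R(x). Then there is a string y obtainable from x by at most 2k applications of end-replication rules T^end_{i,k} such that w is a suffix of y. -/
open Filter

/-! Write `w = w₁ ⋯ wₖ`. Once the current string `y` extends `x` by at least `k` symbols, any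
occurrence of `wⱼ` in `x` starts a factor of `y` of length `k`; copying it to the end and then
copying the factor "last `k - 1` symbols of `y`, followed by the copied `wⱼ`" makes the string end
in those `k - 1` symbols followed by `wⱼ`. So a suffix `w₁ ⋯ wⱼ₋₁` of `y` (of length `< k`) is
extended by `wⱼ` in two steps. For `w₁` there is nothing to preserve: after appending the length-`k`
prefix of `x`, some occurrence of `w₁` has at least `k - 1` symbols before it, and one more step
brings it to the end. -/

section EndReplication

variable {A : Type*} {k m n : ℕ}

theorem List.exists_eq_append_of_le_length {l : List A} (h : k ≤ l.length) :
    ∃ s d, l = s ++ d ∧ d.length = k :=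
  ⟨l.take (l.length - k), l.drop (l.length - k), (List.take_append_drop _ _).symm,
    by simp only [List.length_drop]; omega⟩

theorem EndStep.append_of_infix {y v : List A} (hv : v.length = k) (h : v <:+: y) :
    EndStep k y (y ++ v) := by
  obtain ⟨s, t, rfl⟩ := h
  exact ⟨s, v, t, hv, rfl, rfl⟩

theorem EndStep.exists_append_concat {p t : List A} (a : A) (hp : k ≤ p.length) :
    ∃ d, d.length = k ∧ d <:+ p ∧ EndStep (k + 1) (p ++ a :: t) (p ++ a :: t ++ (d ++ [a])) := by
  obtain ⟨s, d, rfl, hd⟩ := List.exists_eq_append_of_le_length hp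
  refine ⟨d, hd, List.suffix_append _ _, EndStep.append_of_infix (by simp [hd]) ⟨s, t, ?_⟩⟩
  simp

def EndReach (k n : ℕ) (x y : List A) : Prop :=
  ∃ f : ℕ → List A, f 0 = x ∧ f n = y ∧ ∀ i < n, EndStep k (f i) (f (i + 1))

theorem EndReach.refl (x : List A) : EndReach k 0 x x :=
  ⟨fun _ => x, rfl, rfl, fun _ h => absurd h (Nat.not_lt_zero _)⟩

theorem EndReach.tail {x y z : List A} (h : EndReach k n x y) (hs : EndStep k y z) :
    EndReach k (n + 1) x z := by
  obtain ⟨f, hf0, hfn, hf⟩ := h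
  refine ⟨fun i => if i ≤ n then f i else z, by simp [hf0], by simp, fun i hi => ?_⟩
  rcases Nat.lt_succ_iff_lt_or_eq.mp hi with hi | rfl
  · simpa [hi.le, Nat.succ_le_of_lt hi] using hf i hi
  · simpa [hfn] using hs

theorem EndReach.trans {x y : List A} (h₁ : EndReach k m x y) :
    ∀ {n : ℕ} {z : List A}, EndReach k n y z → EndReach k (m + n) x z
  | 0, _, ⟨g, hg0, hgn, _⟩ => by rwa [← hgn, hg0]
  | _ + 1, _, ⟨g, hg0, hgn, hg⟩ =>
    (h₁.trans ⟨g, hg0, rfl, fun i hi => hg i (by omega)⟩).tail (hgn ▸ hg _ (by omega))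

theorem exists_endReach_two_suffix_singleton {x : List A} {a : A} (hx : k + 1 ≤ x.length)
    (ha : a ∈ x) : ∃ r, k ≤ r.length ∧ EndReach (k + 1) 2 x (x ++ r) ∧ [a] <:+ x ++ r := by
  set u := x.take (k + 1)
  have hu : u.length = k + 1 := by simp only [u, List.length_take]; omega
  obtain ⟨p, t, hxu, hp⟩ : ∃ p t, x ++ u = p ++ a :: t ∧ k ≤ p.length := by
    rw [← List.take_append_drop k x, List.mem_append] at ha
    rcases ha with ha | ha
    · obtain ⟨s, t, hst⟩ :=
        List.append_of_mem (List.take_subset_take_left x (j := k + 1) (by omega) ha)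
      exact ⟨x ++ s, t, by simp only [u, hst, List.append_assoc],
        by simp only [List.length_append]; omega⟩
    · obtain ⟨s, t, hst⟩ := List.append_of_mem ha
      refine ⟨x.take k ++ s, t ++ u, ?_, by simp only [List.length_append, List.length_take]; omega⟩
      conv_lhs => rw [← List.take_append_drop k x, hst]
      simp
  obtain ⟨d, -, -, hstep⟩ := EndStep.exists_append_concat (t := t) a hp
  refine ⟨u ++ (d ++ [a]), by simp only [List.length_append, hu]; omega, ?_, ⟨x ++ u ++ d, by simp⟩⟩
  have hcopy : EndStep (k + 1) x (x ++ u) :=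
    EndStep.append_of_infix hu (List.take_prefix (k + 1) x).isInfix
  rw [hxu] at hcopy
  rw [← List.append_assoc, hxu]
  exact ((EndReach.refl x).tail hcopy).tail hstep

theorem exists_endReach_two_suffix_concat {x r p : List A} {a : A} (ha : a ∈ x)
    (hr : k ≤ r.length) (hp : p <:+ x ++ r) (hpk : p.length ≤ k) :
    ∃ r', k ≤ r'.length ∧ EndReach (k + 1) 2 (x ++ r) (x ++ r') ∧ p ++ [a] <:+ x ++ r' := by
  obtain ⟨s, t, rfl⟩ := List.append_of_mem ha
  set v := a :: (t ++ r).take k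
  have hv : v <:+: s ++ a :: t ++ r := ⟨s, (t ++ r).drop k, by simp [v]⟩
  have hvlen : v.length = k + 1 := by
    simp only [v, List.length_cons, List.length_take, List.length_append]; omega
  obtain ⟨d, hd, hdy, hstep⟩ := EndStep.exists_append_concat (k := k) (p := s ++ a :: t ++ r)
    (t := (t ++ r).take k) a (by simp only [List.length_append, List.length_cons]; omega)
  refine ⟨r ++ v ++ (d ++ [a]), by simp only [List.length_append]; omega, ?_, ?_⟩
  · simpa [v] using ((EndReach.refl _).tail (EndStep.append_of_infix hvlen hv)).tail hstep
  · have hpd : p <:+ d := List.suffix_of_suffix_length_le hp hdy (by omega)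
    simpa using (List.suffix_append_self_iff.2 hpd).trans
      (List.suffix_append (s ++ a :: t ++ r ++ v) (d ++ [a]))

theorem exists_endReach_suffix {x : List A} (hx : k + 1 ≤ x.length) (p : List A) (hp : p ≠ [])
    (hpk : p.length ≤ k + 1) (hpx : ∀ a ∈ p, a ∈ x) :
    ∃ r, k ≤ r.length ∧ EndReach (k + 1) (2 * p.length) x (x ++ r) ∧ p <:+ x ++ r := by
  induction p using List.reverseRecOn with
  | nil => exact absurd rfl hp
  | append_singleton p a ih =>
    have ha : a ∈ x := hpx a (by simp)
    rcases eq_or_ne p [] with rfl | hne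
    · simpa using exists_endReach_two_suffix_singleton hx ha
    have hlen : p.length ≤ k := by
      simp only [List.length_append, List.length_singleton] at hpk; omega
    obtain ⟨r, hr, hreach, hsuf⟩ :=
      ih hne (by omega) fun b hb => hpx b (List.mem_append_left _ hb)
    obtain ⟨r', hr', hreach', hsuf'⟩ := exists_endReach_two_suffix_concat ha hr hsuf hlen
    exact ⟨r', hr', by simpa [mul_add] using hreach.trans hreach', hsuf'⟩

end EndReplication

theorem stmt2_general {A : Type*} [DecidableEq A] (k : ℕ)
    (x w : List A) (hx : k ≤ x.length) (hw : w.length = k)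
    (hRw : w.toFinset ⊆ x.toFinset) :
    ∃ y : List A, w <:+ y ∧
      ∃ m ≤ 2 * k, ∃ f : ℕ → List A, f 0 = x ∧ f m = y ∧
        ∀ i < m, EndStep k (f i) (f (i + 1)) := by
  have hwx : ∀ a ∈ w, a ∈ x := by simpa [Finset.subset_iff] using hRw
  cases k with
  | zero => exact ⟨x, by simp [List.length_eq_zero_iff.mp hw], 0, le_rfl, EndReach.refl x⟩
  | succ k =>
    obtain ⟨r, -, hreach, hsuf⟩ :=
      exists_endReach_suffix hx w (List.ne_nil_of_length_pos (by omega)) hw.le hwx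
    exact ⟨x ++ r, hsuf, _, hw ▸ le_rfl, hreach⟩

theorem stmt2 {A : Type*} [Fintype A] [DecidableEq A] (k : ℕ)
    (x w : List A) (hx : k ≤ x.length) (hw : w.length = k)
    (hRw : w.toFinset ⊆ x.toFinset) :
    ∃ y : List A, w <:+ y ∧
      ∃ m ≤ 2 * k, ∃ f : ℕ → List A, f 0 = x ∧ f m = y ∧
        ∀ i < m, EndStep k (f i) (f (i + 1)) :=
  stmt2_general k x w hx hw hRw
end

section
/- Let Σ be a finite alphabet, k ≥ 1 and s ∈ Σ* with |s| ≥ k. For the tandem-replication system S^tan_k = (Σ, s, T^tan_k), cap(S^tan_k) = 0. -/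
open Filter

def TanStep {A : Type*} (k : ℕ) (x y : List A) : Prop :=
  ∃ u v w : List A, v.length = k ∧ x = u ++ v ++ w ∧ y = u ++ v ++ v ++ w

/-!
Every word reachable from `s` arises by choosing a multiplicity `e p` for each position `p` of
`s` and, from the right end of `s` to the left, repeating the length-`k` window starting at `p`
that many times (`TanStep.pump`). These words are closed under one more tandem duplication: one
falling inside the periodic block built at the first position is absorbed into it (raising
`e 0`), and one to the right of that block commutes past it into the suffix. A word of length `n`
has all multiplicities at most `n`, so there are at most `(n + 1) ^ |s|` such words, and
polynomial growth means capacity zero.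
-/

namespace TanStep

variable {A : Type*} {k : ℕ}

def dup (k i : ℕ) (x : List A) : List A := x.take (i + k) ++ x.drop i

lemma exists_eq_dup {x y : List A} (h : TanStep k x y) :
    ∃ i, i + k ≤ x.length ∧ y = dup k i x := by
  obtain ⟨u, v, w, rfl, rfl, rfl⟩ := h
  refine ⟨u.length, by simp, ?_⟩
  simp [dup, List.take_append]

lemma length_dup {i : ℕ} {x : List A} (h : i + k ≤ x.length) :
    (dup k i x).length = x.length + k := by
  simp only [dup, List.length_append, List.length_take, List.length_drop]
  omega

lemma dup_append (u x : List A) (j : ℕ) :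
    dup k (u.length + j) (u ++ x) = u ++ dup k j x := by
  simp [dup, List.take_append, List.drop_append, Nat.add_assoc, List.take_of_length_le,
    List.drop_eq_nil_of_le]

lemma dup_cons_succ (a : A) (x : List A) (j : ℕ) :
    dup k (j + 1) (a :: x) = a :: dup k j x := by
  simpa [Nat.add_comm] using dup_append [a] x j

lemma take_dup {j : ℕ} {x : List A} (h : k ≤ x.length) : (dup k j x).take k = x.take k := by
  rw [dup, List.take_append_of_le_length (by simp only [List.length_take]; omega),
    List.take_take, min_eq_left (by omega)]

lemma dup_zero (x : List A) : dup k 0 x = x.take k ++ x := by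
  simp [dup]

lemma iterate_dup_zero {x : List A} (h : k ≤ x.length) (m : ℕ) :
    (dup k 0)^[m] x = (List.replicate m (x.take k)).flatten ++ x := by
  induction m generalizing x with
  | zero => rfl
  | succ m ih =>
    rw [Function.iterate_succ_apply, ih (by rw [length_dup (by omega)]; omega), take_dup h,
      dup_zero, List.replicate_succ', List.flatten_append]
    simp

lemma dup_triple {j : ℕ} {w : List A} (hw : w.length = k) (hj : j ≤ k) (r : List A) :
    dup k j (w ++ w ++ r) = w ++ w ++ w ++ r := by
  simp [dup, List.take_append, List.drop_append, hw, hj, List.take_of_length_le,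
    ← List.append_assoc (w.take j)]

lemma dup_flatten_replicate {w : List A} (hw : w.length = k) {q j n : ℕ} (hj : j ≤ k)
    (hq : q + 2 ≤ n) (r : List A) :
    dup k (q * k + j) ((List.replicate n w).flatten ++ r) =
      (List.replicate (n + 1) w).flatten ++ r := by
  obtain ⟨t, rfl⟩ := Nat.exists_eq_add_of_le hq
  rw [show q + 2 + t + 1 = q + 3 + t by omega]
  have hqk : (List.replicate q w).flatten.length = q * k := by simp [List.sum_replicate, hw]
  simp only [List.replicate_add, List.flatten_append, List.append_assoc, ← hqk, dup_append]
  simpa [List.replicate_succ, List.flatten_cons] using dup_triple hw hj _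

lemma dup_iterate_dup_zero_of_lt {i m : ℕ} {x : List A} (h : k ≤ x.length) (hi : i < m * k) :
    dup k i ((dup k 0)^[m] x) = (dup k 0)^[m + 1] x := by
  have hk : 0 < k := Nat.pos_of_ne_zero (by rintro rfl; simp at hi)
  obtain ⟨q, j, hj, rfl⟩ : ∃ q j, j < k ∧ i = q * k + j :=
    ⟨i / k, i % k, Nat.mod_lt i hk, (Nat.div_add_mod' i k).symm⟩
  have hq : q < m := Nat.lt_of_mul_lt_mul_right (a := k) (by omega)
  obtain ⟨w, r, hw, rfl⟩ : ∃ w r, w.length = k ∧ x = w ++ r :=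
    ⟨x.take k, x.drop k, by simp only [List.length_take]; omega, (List.take_append_drop k x).symm⟩
  have hwt : (w ++ r).take k = w := by simp [hw]
  have hsucc (n : ℕ) : (List.replicate n w).flatten ++ (w ++ r) =
      (List.replicate (n + 1) w).flatten ++ r := by
    simp [List.replicate_succ', List.flatten_append]
  rw [iterate_dup_zero h, iterate_dup_zero h, hwt, hsucc, hsucc]
  exact dup_flatten_replicate hw hj.le (by omega) r

lemma dup_iterate_dup_zero_add {j m : ℕ} {x : List A} (h : k ≤ x.length) :
    dup k (m * k + j) ((dup k 0)^[m] x) = (dup k 0)^[m] (dup k j x) := by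
  have hd : k ≤ (dup k j x).length := by
    simp only [dup, List.length_append, List.length_take, List.length_drop]
    omega
  rw [iterate_dup_zero h, iterate_dup_zero hd, take_dup h]
  have hl : (List.replicate m (x.take k)).flatten.length = m * k := by
    simp only [List.length_flatten, List.map_replicate, List.length_take, min_eq_left h,
      List.sum_replicate, smul_eq_mul]
  rw [← hl, dup_append]

lemma length_iterate_dup_zero {m : ℕ} {x : List A} (h : m ≠ 0 → k ≤ x.length) :
    ((dup k 0)^[m] x).length = x.length + m * k := by
  rcases Nat.eq_zero_or_pos m with rfl | hm
  · simp
  have hx := h hm.ne'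
  rw [iterate_dup_zero hx]
  simp only [List.length_append, List.length_flatten, List.map_replicate, List.length_take,
    min_eq_left hx, List.sum_replicate, smul_eq_mul]
  ring

def pump (k : ℕ) : (s : List A) → (Fin s.length → ℕ) → List A
  | [], _ => []
  | a :: s, e => (dup k 0)^[e 0] (a :: pump k s (Fin.tail e))

/-- `dup k 0` doubles a word shorter than `k` instead of performing a tandem duplication, so a
nonzero multiplicity is only allowed where the window fits. -/
def Admissible (k : ℕ) : (s : List A) → (Fin s.length → ℕ) → Prop
  | [], _ => True
  | a :: s, e => (e 0 ≠ 0 → k ≤ (a :: pump k s (Fin.tail e)).length) ∧ Admissible k s (Fin.tail e)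

lemma pump_zero (s : List A) : pump k s 0 = s := by
  induction s with
  | nil => rfl
  | cons a s ih => exact congrArg (a :: ·) ih

lemma admissible_zero (s : List A) : Admissible k s 0 := by
  induction s with
  | nil => trivial
  | cons a s ih => exact ⟨fun h => absurd rfl h, ih⟩

lemma length_pump {s : List A} {e : Fin s.length → ℕ} (he : Admissible k s e) :
    (pump k s e).length = s.length + k * ∑ p, e p := by
  induction s with
  | nil => simp [pump]
  | cons a s ih =>
    have hsum : ∑ p, e p = e 0 + ∑ p, Fin.tail e p := Fin.sum_univ_succ e
    rw [pump, length_iterate_dup_zero he.1, List.length_cons, ih he.2, hsum]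
    simp only [List.length_cons]
    ring

lemma exists_pump_eq_dup {s : List A} {e : Fin s.length → ℕ} (he : Admissible k s e) {i : ℕ}
    (hi : i + k ≤ (pump k s e).length) :
    ∃ e', Admissible k s e' ∧ pump k s e' = dup k i (pump k s e) := by
  induction s generalizing i with
  | nil => exact ⟨e, he, by simp [pump, dup]⟩
  | cons a s ih =>
    obtain ⟨hz₀, hadm⟩ := he
    set z := a :: pump k s (Fin.tail e)
    have hpump : pump k (a :: s) e = (dup k 0)^[e 0] z := rfl
    rw [hpump] at hi ⊢
    by_cases hlt : i < e 0 * k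
    · have hz := hz₀ (by rintro h; simp [h] at hlt)
      refine ⟨Fin.cons (e 0 + 1) (Fin.tail e), ⟨fun _ => by simpa [z] using hz, by simpa⟩, ?_⟩
      simp only [pump, Fin.cons_zero, Fin.tail_cons]
      exact (dup_iterate_dup_zero_of_lt hz hlt).symm
    have hz : k ≤ z.length := by
      by_cases h0 : e 0 = 0
      · rw [h0] at hi; simp only [Function.iterate_zero, id] at hi; omega
      · exact hz₀ h0
    obtain ⟨j, rfl⟩ := Nat.exists_eq_add_of_le (not_lt.1 hlt)
    rw [dup_iterate_dup_zero_add hz]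
    rcases j with _ | j
    · refine ⟨Fin.cons (e 0 + 1) (Fin.tail e), ⟨fun _ => by simpa [z] using hz, by simpa⟩, ?_⟩
      simp only [pump, Fin.cons_zero, Fin.tail_cons, Function.iterate_succ_apply]
      rfl
    · rw [length_iterate_dup_zero hz₀] at hi
      have hj : j + k ≤ (pump k s (Fin.tail e)).length := by
        simp only [List.length_cons, z] at hi
        omega
      obtain ⟨e', he', heq⟩ := ih hadm hj
      refine ⟨Fin.cons (e 0) e', ⟨fun _ => ?_, by simpa⟩, ?_⟩
      · simp only [Fin.tail_cons, List.length_cons, heq, length_dup hj]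
        omega
      · simp only [pump, Fin.cons_zero, Fin.tail_cons, heq, z, dup_cons_succ]

lemma exists_pump_of_mem_sys {s x : List A} (hx : x ∈ Sys (TanStep k) s) :
    ∃ e, Admissible k s e ∧ pump k s e = x := by
  induction hx with
  | refl => exact ⟨0, admissible_zero s, pump_zero s⟩
  | tail _ hstep ih =>
    obtain ⟨e, he, rfl⟩ := ih
    obtain ⟨i, hi, rfl⟩ := hstep.exists_eq_dup
    exact exists_pump_eq_dup he hi

lemma ncard_sys_le (hk : 1 ≤ k) (s : List A) (n : ℕ) :
    ({x ∈ Sys (TanStep k) s | x.length = n} : Set (List A)).ncard ≤ (n + 1) ^ s.length := by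
  have hsub : ({x ∈ Sys (TanStep k) s | x.length = n} : Set (List A)) ⊆
      Set.range (fun f : Fin s.length → Fin (n + 1) => pump k s (fun p => f p)) := by
    rintro x ⟨hx, rfl⟩
    obtain ⟨e, he, rfl⟩ := exists_pump_of_mem_sys hx
    have hle (p : Fin s.length) : e p < (pump k s e).length + 1 := by
      have := Finset.single_le_sum (fun q _ => Nat.zero_le (e q)) (Finset.mem_univ p)
      rw [length_pump he]; nlinarith
    exact ⟨fun p => ⟨e p, hle p⟩, rfl⟩
  calc _ ≤ (Set.range (fun f : Fin s.length → Fin (n + 1) => pump k s (fun p => f p))).ncard :=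
        Set.ncard_le_ncard hsub (Set.finite_range _)
    _ ≤ Nat.card (Fin s.length → Fin (n + 1)) := Finite.card_range_le _
    _ = (n + 1) ^ s.length := by simp

end TanStep

lemma cap_eq_zero_of_ncard_le_pow {A : Type*} {S : Set (List A)} (d : ℕ)
    (h : ∀ n, ({x ∈ S | x.length = n} : Set (List A)).ncard ≤ (n + 1) ^ d) : cap S = 0 := by
  have hlog : Tendsto (fun n : ℕ => Real.log ((n : ℝ) + 1) / n) atTop (nhds 0) := by
    have := (Real.tendsto_pow_log_div_mul_add_atTop 1 (-1) 1 one_ne_zero).comp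
      (tendsto_atTop_add_const_right _ 1 tendsto_natCast_atTop_atTop)
    simpa [Function.comp_def] using this
  refine Tendsto.limsup_eq (tendsto_of_tendsto_of_tendsto_of_le_of_le tendsto_const_nhds
    (by simpa using hlog.const_mul (d / Real.log 2)) (fun n => ?_) (fun n => ?_))
  · exact div_nonneg (div_nonneg (Real.log_natCast_nonneg _) (Real.log_nonneg one_le_two))
      (Nat.cast_nonneg n)
  set N := ({x ∈ S | x.length = n} : Set (List A)).ncard
  have hN : Real.log N ≤ d * Real.log ((n : ℝ) + 1) := by
    rcases N.eq_zero_or_pos with h0 | hpos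
    · rw [h0, Nat.cast_zero, Real.log_zero]
      have hn : (1 : ℝ) ≤ n + 1 := le_add_of_nonneg_left (Nat.cast_nonneg n)
      exact mul_nonneg (Nat.cast_nonneg d) (Real.log_nonneg hn)
    · rw [← Real.log_pow]
      exact Real.log_le_log (by exact_mod_cast hpos) (by exact_mod_cast h n)
  rw [Real.logb, show (d : ℝ) / Real.log 2 * (Real.log ((n : ℝ) + 1) / n) =
    d * Real.log ((n : ℝ) + 1) / Real.log 2 / n by ring]
  gcongr

theorem stmt3_general {A : Type*} (k : ℕ) (hk : 1 ≤ k)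
    (s : List A) :
    cap (Sys (TanStep k) s) = 0 :=
  cap_eq_zero_of_ncard_le_pow s.length (TanStep.ncard_sys_le hk s)

theorem stmt3 {A : Type*} [Fintype A] [DecidableEq A] (k : ℕ) (hk : 1 ≤ k)
    (s : List A) (hs : k ≤ s.length) :
    cap (Sys (TanStep k) s) = 0 :=
  stmt3_general k hk s
end

section
/- Fix k ≥ 1 and an initial string s with |s| ≥ k defining b 'bins' (b equals one more than the number of indices i with φ(s'_i) ≠ φ(s'_{i+1}), where s'_i are the overlapping k-substrings of s and φ denotes cyclic-equivalence class). Then the number of distinct strings obtainable from s by exactly m tandem replications T^tan_{i,k} is at most C(b+m−1, b−1); in particular the number of strings of length n in S^tan_k grows at most polynomially in n. -/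
open Filter

/-!
Call `q` a break of `t` if `t[q + k] ≠ t[q]`. Consecutive windows that are rotations of each
other differ only in their first and last letters, which then agree, so `s` has at most `b - 1`
breaks. Below its first break `d` the word is `k`-periodic, and sliding a duplicated window one
letter to the left across a periodic position does not change the result. Hence a word reached in
`m` steps is `a` copies of the first window `v`, then `t.take (d + 1)`, then a word `z` reached in
`m - a` steps from `t.drop (d + 1)`, which has fewer breaks. Induction on the number of breaks and
the hockey-stick identity bound the number of words by `(m + c).choose c ≤ (m + 1) ^ c`.
-/

namespace Relation

variable {α : Type*} {r : α → α → Prop} {a y : α} {m : ℕ}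

def reachIn (r : α → α → Prop) (a : α) (m : ℕ) : Set α :=
  {y | ∃ f : ℕ → α, f 0 = a ∧ f m = y ∧ ∀ i < m, r (f i) (f (i + 1))}

@[simp]
theorem reachIn_zero (r : α → α → Prop) (a : α) : reachIn r a 0 = {a} := by
  ext y
  constructor
  · rintro ⟨f, rfl, rfl, -⟩
    rfl
  · rintro rfl
    exact ⟨fun _ => y, rfl, rfl, by omega⟩

theorem mem_reachIn_succ : y ∈ reachIn r a (m + 1) ↔ ∃ x ∈ reachIn r a m, r x y := by
  constructor
  · rintro ⟨f, h0, rfl, hf⟩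
    exact ⟨f m, ⟨f, h0, rfl, fun i hi => hf i (by omega)⟩, hf m (by omega)⟩
  · rintro ⟨x, ⟨f, h0, rfl, hf⟩, hxy⟩
    refine ⟨fun i => if i ≤ m then f i else y, by simp [h0], by simp, fun i hi => ?_⟩
    obtain hi | rfl := Nat.lt_or_eq_of_le (Nat.le_of_lt_succ hi)
    · simpa [hi.le, Nat.succ_le_of_lt hi] using hf i hi
    · simpa using hxy

theorem exists_mem_reachIn_of_reflTransGen (h : ReflTransGen r a y) :
    ∃ m, y ∈ reachIn r a m := by
  induction h with
  | refl => exact ⟨0, by simp⟩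
  | tail _ hxy ih =>
    obtain ⟨m, hm⟩ := ih
    exact ⟨m + 1, mem_reachIn_succ.mpr ⟨_, hm, hxy⟩⟩

theorem finite_reachIn (hr : ∀ x, {y | r x y}.Finite) (a : α) (m : ℕ) :
    (reachIn r a m).Finite := by
  induction m with
  | zero => simp
  | succ m ih =>
    refine (ih.biUnion fun x _ => hr x).subset fun y hy => ?_
    obtain ⟨x, hx, hxy⟩ := mem_reachIn_succ.mp hy
    exact Set.mem_biUnion hx hxy

end Relation

theorem List.eq_of_isRotated_cons_append {α : Type*} {x y : α} {u : List α}
    (h : (x :: u) ~r (u ++ [y])) : x = y :=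
  (Multiset.cons_inj_left (u : Multiset α)).mp
    (Multiset.coe_eq_coe.mpr (h.perm.trans (List.perm_append_singleton y u)))

namespace TandemDuplication

open List Relation

variable {α : Type*} {k p n m : ℕ} {t v w y z : List α}

def dup (k p : ℕ) (t : List α) : List α := t.take (p + k) ++ t.drop p

theorem tanStep_iff : TanStep k t y ↔ ∃ p, p + k ≤ t.length ∧ y = dup k p t := by
  constructor
  · rintro ⟨u, v, w, hv, rfl, rfl⟩
    refine ⟨u.length, by simp; omega, ?_⟩
    simp [dup, take_append, hv]
  · rintro ⟨p, hp, rfl⟩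
    refine ⟨t.take p, (t.drop p).take k, t.drop (p + k), by simp; omega, ?_, ?_⟩
    · rw [append_assoc, ← drop_drop, take_append_drop, take_append_drop]
    · rw [dup, take_add, ← drop_drop]
      simp

theorem length_dup (hp : p + k ≤ t.length) : (dup k p t).length = t.length + k := by
  simp [dup]
  omega

theorem take_dup (hp : p + k ≤ t.length) : (dup k p t).take k = t.take k := by
  rw [dup, take_append_of_le_length (by simp; omega), take_take, Nat.min_eq_left (by omega)]

theorem dup_append (hp : v.length ≤ p) : dup k p (v ++ z) = v ++ dup k (p - v.length) z := by
  rw [dup, dup, take_append, drop_append, take_of_length_le (by omega),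
    drop_eq_nil_of_le hp, Nat.sub_add_comm hp, nil_append, append_assoc]

theorem dup_succ (hp : p + k < t.length) (h : t[p + k]? = t[p]?) :
    dup k (p + 1) t = dup k p t := by
  rw [dup, dup, Nat.add_right_comm, take_add_one, h, drop_eq_getElem_cons (i := p) (by omega),
    getElem?_eq_getElem (by omega)]
  simp

theorem length_of_mem_reachIn (hy : y ∈ reachIn (TanStep k) t m) :
    y.length = t.length + k * m := by
  induction m generalizing y with
  | zero => simp_all
  | succ m ih =>
    obtain ⟨x, hx, hxy⟩ := mem_reachIn_succ.mp hy
    obtain ⟨p, hp, rfl⟩ := tanStep_iff.mp hxy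
    rw [length_dup hp, ih hx, Nat.mul_succ, Nat.add_assoc]

theorem take_of_mem_reachIn (hy : y ∈ reachIn (TanStep k) t m) :
    y.take k = t.take k := by
  induction m generalizing y with
  | zero => simp_all
  | succ m ih =>
    obtain ⟨x, hx, hxy⟩ := mem_reachIn_succ.mp hy
    obtain ⟨p, hp, rfl⟩ := tanStep_iff.mp hxy
    rw [take_dup hp, ih hx]

theorem finite_reachIn_tanStep (k : ℕ) (t : List α) (m : ℕ) :
    (reachIn (TanStep k) t m).Finite := by
  refine finite_reachIn (fun x => ((Set.finite_Iic x.length).image (dup k · x)).subset ?_) t m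
  intro y hy
  obtain ⟨p, hp, rfl⟩ := tanStep_iff.mp hy
  exact ⟨p, by simp; omega, rfl⟩

def PeriodicBelow (k : ℕ) (t : List α) (n : ℕ) : Prop :=
  ∀ q < n, q + k < t.length → t[q + k]? = t[q]?

theorem PeriodicBelow.mono (h : PeriodicBelow k t n) (hmn : m ≤ n) :
    PeriodicBelow k t m :=
  fun q hq => h q (by omega)

theorem PeriodicBelow.of_take_eq {j : ℕ} (h : PeriodicBelow k t n) (hj : n + k ≤ j)
    (he : w.take j = t.take j) : PeriodicBelow k w n := by
  have hlen := congrArg length he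
  simp only [length_take] at hlen
  have hwt : ∀ i < j, w[i]? = t[i]? := fun i hi => by
    rw [← getElem?_take_of_lt hi, he, getElem?_take_of_lt hi]
  intro q hq hqw
  rw [hwt _ (by omega), hwt _ (by omega)]
  exact h q hq (by omega)

theorem PeriodicBelow.append (hv : v.length = k) (hvw : v <+: w) (h : PeriodicBelow k w n) :
    PeriodicBelow k (v ++ w) (n + k) := by
  intro q hq hql
  rw [length_append] at hql
  rcases lt_or_ge q k with hqk | hqk
  · rw [getElem?_append_right (by omega), getElem?_append_left (by omega), hv,
      Nat.add_sub_cancel, prefix_iff_eq_take.mp hvw, getElem?_take_of_lt (by omega)]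
  · rw [getElem?_append_right (by omega), getElem?_append_right (by omega), hv,
      Nat.add_sub_cancel, ← h (q - k) (by omega) (by omega), Nat.sub_add_cancel hqk]

theorem dup_eq_of_periodicBelow (h : PeriodicBelow k t p) (hp : p + k ≤ t.length) :
    dup k p t = t.take k ++ t := by
  induction p with
  | zero => simp [dup]
  | succ p ih =>
    rw [dup_succ (by omega) (h p (by omega) (by omega)), ih (h.mono p.le_succ) (by omega)]

theorem prefix_flatten_replicate_append (hvw : v <+: w) :
    ∀ a : ℕ, v <+: (replicate a v).flatten ++ w
  | 0 => by simpa
  | a + 1 => by simp [replicate_succ, append_assoc]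

theorem PeriodicBelow.flatten_replicate_append (hv : v.length = k) (hvw : v <+: w)
    (h : PeriodicBelow k w n) (a : ℕ) :
    PeriodicBelow k ((replicate a v).flatten ++ w) (a * k + n) := by
  induction a with
  | zero => simpa
  | succ a ih =>
    have := ih.append hv (prefix_flatten_replicate_append hvw a)
    rw [← append_assoc, ← flatten_cons, ← replicate_succ] at this
    exact this.mono (by rw [Nat.succ_mul]; omega)

theorem dup_flatten_replicate_append {a : ℕ} (hv : v.length = k) (hvw : v <+: w)
    (h : PeriodicBelow k w n) (hpn : p ≤ a * k + n)
    (hp : p + k ≤ ((replicate a v).flatten ++ w).length) :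
    dup k p ((replicate a v).flatten ++ w) = (replicate (a + 1) v).flatten ++ w := by
  rw [dup_eq_of_periodicBelow ((h.flatten_replicate_append hv hvw a).mono hpn) hp, ← hv,
    ← prefix_iff_eq_take.mp (prefix_flatten_replicate_append hvw a)]
  simp [replicate_succ]

theorem eq_flatten_replicate_append_of_mem_reachIn (hk : k ≤ t.length)
    (hper : PeriodicBelow k t t.length) (hy : y ∈ reachIn (TanStep k) t m) :
    y = (replicate m (t.take k)).flatten ++ t := by
  induction m generalizing y with
  | zero => simp_all
  | succ m ih =>
    obtain ⟨x, hx, hxy⟩ := mem_reachIn_succ.mp hy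
    obtain ⟨p, hp, rfl⟩ := tanStep_iff.mp hxy
    rw [ih hx] at hp ⊢
    have hpn : p ≤ m * k + t.length := by simp [hk] at hp; omega
    exact dup_flatten_replicate_append (by simpa) (take_prefix k t) hper hpn hp

theorem exists_eq_flatten_replicate_append_of_mem_reachIn {d : ℕ} (hk : k ≤ t.length)
    (hd : d < t.length) (hper : PeriodicBelow k t d) (hy : y ∈ reachIn (TanStep k) t m) :
    ∃ a ≤ m, ∃ z ∈ reachIn (TanStep k) (t.drop (d + 1)) (m - a),
      y = (replicate a (t.take k)).flatten ++ (t.take (d + 1) ++ z) := by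
  induction m generalizing y with
  | zero => exact ⟨0, le_rfl, t.drop (d + 1), by simp, by simp_all⟩
  | succ m ih =>
    obtain ⟨x, hx, hxy⟩ := mem_reachIn_succ.mp hy
    obtain ⟨p, hp, rfl⟩ := tanStep_iff.mp hxy
    obtain ⟨a, ha, z, hz, rfl⟩ := ih hx
    have htake : (t.take (d + 1) ++ z).take (d + 1 + k) = t.take (d + 1 + k) := by
      rw [take_append, take_take, length_take, Nat.min_eq_left hd, Nat.min_eq_right (by omega),
        Nat.add_sub_cancel_left, take_of_mem_reachIn hz]
      exact take_add.symm
    have hvw : t.take k <+: t.take (d + 1) ++ z := by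
      have := congrArg (take k) htake
      rw [take_take, take_take, Nat.min_eq_left (by omega)] at this
      exact this ▸ take_prefix k _
    have hwper := hper.of_take_eq (by omega) htake
    have hX : ((replicate a (t.take k)).flatten ++ t.take (d + 1)).length = a * k + (d + 1) := by
      simp [hk]
      omega
    by_cases hpd : p ≤ a * k + d
    · refine ⟨a + 1, by omega, z, by rwa [Nat.add_sub_add_right], ?_⟩
      exact dup_flatten_replicate_append (by simpa) hvw hwper hpd hp
    · refine ⟨a, by omega, dup k (p - (a * k + (d + 1))) z, ?_, ?_⟩
      · rw [Nat.sub_add_comm ha, mem_reachIn_succ]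
        refine ⟨z, hz, tanStep_iff.mpr ⟨_, ?_, rfl⟩⟩
        simp [hk] at hp
        omega
      · rw [← append_assoc, dup_append (by omega), hX, append_assoc]

open Classical in
noncomputable def breaks (k : ℕ) (t : List α) : Finset ℕ :=
  (Finset.range (t.length - k)).filter fun q => t[q + k]? ≠ t[q]?

theorem mem_breaks {q : ℕ} : q ∈ breaks k t ↔ q + k < t.length ∧ t[q + k]? ≠ t[q]? := by
  simp only [breaks, Finset.mem_filter, Finset.mem_range, Nat.lt_sub_iff_add_lt]

theorem periodicBelow_of_forall_mem_breaks {n : ℕ} (h : ∀ q ∈ breaks k t, n ≤ q) :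
    PeriodicBelow k t n := by
  intro q hq hqt
  by_contra hne
  have := h q (mem_breaks.mpr ⟨hqt, hne⟩)
  omega

theorem card_breaks_drop_lt {d : ℕ} (hd : d ∈ breaks k t) :
    (breaks k (t.drop (d + 1))).card < (breaks k t).card := by
  have hsub : (breaks k (t.drop (d + 1))).image (· + (d + 1)) ⊆ (breaks k t).erase d := by
    intro e he
    obtain ⟨q, hq, rfl⟩ := Finset.mem_image.mp he
    rw [mem_breaks, length_drop, getElem?_drop, getElem?_drop] at hq
    refine Finset.mem_erase.mpr ⟨by omega, mem_breaks.mpr ⟨by omega, ?_⟩⟩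
    rw [show q + (d + 1) + k = d + 1 + (q + k) by omega, show q + (d + 1) = d + 1 + q by omega]
    exact hq.2
  calc (breaks k (t.drop (d + 1))).card
      = ((breaks k (t.drop (d + 1))).image (· + (d + 1))).card :=
        (Finset.card_image_of_injective _ (add_left_injective _)).symm
    _ ≤ ((breaks k t).erase d).card := Finset.card_le_card hsub
    _ < (breaks k t).card := Finset.card_erase_lt_of_mem hd

theorem ncard_reachIn_le_one (hk : k ≤ t.length) (h : breaks k t = ∅) :
    (reachIn (TanStep k) t m).ncard ≤ 1 := by
  have hper : PeriodicBelow k t t.length := periodicBelow_of_forall_mem_breaks (by simp [h])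
  calc (reachIn (TanStep k) t m).ncard
      ≤ ({(replicate m (t.take k)).flatten ++ t} : Set (List α)).ncard :=
        Set.ncard_le_ncard (fun y hy => eq_flatten_replicate_append_of_mem_reachIn hk hper hy)
    _ = 1 := Set.ncard_singleton _

theorem ncard_reachIn_le_choose {c : ℕ} (hk : k ≤ t.length) (hc : (breaks k t).card ≤ c)
    (m : ℕ) : (reachIn (TanStep k) t m).ncard ≤ (m + c).choose c := by
  induction c generalizing t m with
  | zero => simpa using ncard_reachIn_le_one hk (Finset.card_eq_zero.mp (by omega))
  | succ c ih =>
    obtain hempty | hne := (breaks k t).eq_empty_or_nonempty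
    · exact (ncard_reachIn_le_one hk hempty).trans (Nat.choose_pos (by omega))
    set d := (breaks k t).min' hne
    have hd : d ∈ breaks k t := Finset.min'_mem _ _
    have hdt := (mem_breaks.mp hd).1
    have hper : PeriodicBelow k t d :=
      periodicBelow_of_forall_mem_breaks fun q hq => Finset.min'_le _ q hq
    set F : ℕ → Set (List α) := fun a =>
      (fun z => (replicate a (t.take k)).flatten ++ (t.take (d + 1) ++ z)) ''
        reachIn (TanStep k) (t.drop (d + 1)) (m - a)
    have hcover : reachIn (TanStep k) t m ⊆ ⋃ a ∈ Finset.range (m + 1), F a := by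
      intro y hy
      obtain ⟨a, ha, z, hz, rfl⟩ :=
        exists_eq_flatten_replicate_append_of_mem_reachIn hk (by omega) hper hy
      exact Set.mem_biUnion (Finset.mem_range.mpr (by omega)) ⟨z, hz, rfl⟩
    have hF : ∀ a, (F a).ncard ≤ (m - a + c).choose c := fun a =>
      (Set.ncard_image_le (finite_reachIn_tanStep _ _ _)).trans
        (ih (by simp; omega) (by have := card_breaks_drop_lt hd; omega) _)
    calc (reachIn (TanStep k) t m).ncard
        ≤ (⋃ a ∈ Finset.range (m + 1), F a).ncard :=
          Set.ncard_le_ncard hcover ((Finset.range (m + 1)).finite_toSet.biUnion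
            fun a _ => (finite_reachIn_tanStep _ _ _).image _)
      _ ≤ ∑ a ∈ Finset.range (m + 1), (F a).ncard := Finset.set_ncard_biUnion_le _ _
      _ ≤ ∑ a ∈ Finset.range (m + 1), (m - a + c).choose c :=
          Finset.sum_le_sum fun a _ => hF a
      _ = ∑ i ∈ Finset.range (m + 1), (i + c).choose c := by
          rw [← Finset.sum_range_reflect (fun i => (i + c).choose c)]
          simp
      _ = (m + (c + 1)).choose (c + 1) := by rw [Nat.sum_range_add_choose, Nat.add_assoc]

theorem getElem?_add_eq_of_isRotated {s : List α} {q : ℕ} (hk : 0 < k) (hq : q + k < s.length)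
    (h : (s.drop q).take k ~r (s.drop (q + 1)).take k) : s[q + k]? = s[q]? := by
  obtain ⟨j, rfl⟩ : ∃ j, k = j + 1 := ⟨k - 1, by omega⟩
  have hfirst : (s.drop q).take (j + 1) = s[q] :: (s.drop (q + 1)).take j := by
    rw [drop_eq_getElem_cons (by omega), take_succ_cons]
  have hsecond : (s.drop (q + 1)).take (j + 1) = (s.drop (q + 1)).take j ++ [s[q + (j + 1)]] := by
    rw [take_add_one, getElem?_drop, Nat.add_assoc, Nat.add_comm 1 j, getElem?_eq_getElem hq]
    rfl
  rw [hfirst, hsecond] at h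
  rw [getElem?_eq_getElem hq, getElem?_eq_getElem (by omega), eq_of_isRotated_cons_append h]

theorem card_breaks_le_ncard (hk : 0 < k) (s : List α) :
    (breaks k s).card ≤ {i : ℕ | i + 1 ≤ s.length - k ∧
        ¬ ∃ j : ℕ, ((s.drop (i + 1)).take k) = ((s.drop i).take k).rotate j}.ncard := by
  rw [← Set.ncard_coe_finset]
  refine Set.ncard_le_ncard (fun q hq => ?_) ((Set.finite_Iio s.length).subset fun i hi => ?_)
  · obtain ⟨hqs, hne⟩ := mem_breaks.mp hq
    exact ⟨by omega, fun ⟨j, hj⟩ =>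
      hne (getElem?_add_eq_of_isRotated hk hqs ⟨j, hj.symm⟩)⟩
  · have := hi.1
    simp only [Set.mem_Iio]
    omega

theorem setOf_length_subset_reachIn (hk : 0 < k) (s : List α) (n : ℕ) :
    {x ∈ Sys (TanStep k) s | x.length = n} ⊆ reachIn (TanStep k) s ((n - s.length) / k) := by
  rintro x ⟨hx, rfl⟩
  obtain ⟨m, hm⟩ := exists_mem_reachIn_of_reflTransGen hx
  rwa [length_of_mem_reachIn hm, Nat.add_sub_cancel_left, Nat.mul_div_cancel_left m hk]

end TandemDuplication

open TandemDuplication Relation in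
theorem stmt5_general {A : Type*} (k : ℕ) (hk : 1 ≤ k)
    (s : List A) (hs : k ≤ s.length)
    (b : ℕ)
    (hb : b = 1 + ({i : ℕ | i + 1 ≤ s.length - k ∧
        ¬ ∃ j : ℕ, ((s.drop (i + 1)).take k) = ((s.drop i).take k).rotate j} :
          Set ℕ).ncard) :
    (∀ m : ℕ,
      ({y : List A | ∃ f : ℕ → List A, f 0 = s ∧ f m = y ∧
          ∀ i < m, TanStep k (f i) (f (i + 1))} : Set (List A)).ncard ≤
        Nat.choose (b + m - 1) (b - 1)) ∧
    ∃ c d : ℕ, ∀ n : ℕ,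
      ({x ∈ Sys (TanStep k) s | x.length = n} : Set (List A)).ncard ≤
        c * (n + 1) ^ d := by
  have hcount (m : ℕ) : (reachIn (TanStep k) s m).ncard ≤ (m + (b - 1)).choose (b - 1) :=
    ncard_reachIn_le_choose hs ((card_breaks_le_ncard hk s).trans (by omega)) m
  refine ⟨fun m => ?_, 1, b - 1, fun n => ?_⟩
  · rw [show b + m - 1 = m + (b - 1) by omega]
    exact hcount m
  · calc _ ≤ (reachIn (TanStep k) s ((n - s.length) / k)).ncard :=
          Set.ncard_le_ncard (setOf_length_subset_reachIn hk s n) (finite_reachIn_tanStep _ _ _)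
      _ ≤ ((n - s.length) / k + 1) ^ (b - 1) :=
          (hcount _).trans (Nat.choose_add_le_add_one_pow _ _)
      _ ≤ 1 * (n + 1) ^ (b - 1) := by
          rw [one_mul]
          gcongr
          exact (Nat.div_le_self _ _).trans (Nat.sub_le _ _)

theorem stmt5 {A : Type*} [Fintype A] [DecidableEq A] (k : ℕ) (hk : 1 ≤ k)
    (s : List A) (hs : k ≤ s.length)
    (b : ℕ)
    (hb : b = 1 + ({i : ℕ | i + 1 ≤ s.length - k ∧
        ¬ ∃ j : ℕ, ((s.drop (i + 1)).take k) = ((s.drop i).take k).rotate j} :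
          Set ℕ).ncard) :
    (∀ m : ℕ,
      ({y : List A | ∃ f : ℕ → List A, f 0 = s ∧ f m = y ∧
          ∀ i < m, TanStep k (f i) (f (i + 1))} : Set (List A)).ncard ≤
        Nat.choose (b + m - 1) (b - 1)) ∧
    ∃ c d : ℕ, ∀ n : ℕ,
      ({x ∈ Sys (TanStep k) s | x.length = n} : Set (List A)).ncard ≤
        c * (n + 1) ^ d :=
  stmt5_general k hk s hs b hb
end

section
/- Let Σ = {0,1} and s ∈ Σ* contain both symbols 0 and 1. Then for the system S^tan_{≥1} = (Σ, s, T^tan_{≥1}), cap(S^tan_{≥1}) = 1. -/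
/-!
A word containing both letters has a factor `x (¬x)`. Tandem duplications of length at least one
turn `x (¬x)` into every word `x f (¬x)`: if the target contains a square `aa`, it comes from the
shorter word with `a` in its place; otherwise it starts with `x (¬x) x` and is obtained by first
squaring `x (¬x)` and then growing the second copy. Hence the system contains every word
`p x f (¬x) q`, so it has between `2 ^ (n - |s|)` and `2 ^ n` words of length `n`.
-/

open Filter

def TanGeStep {A : Type*} (k : ℕ) (x y : List A) : Prop :=
  ∃ u v w : List A, k ≤ v.length ∧ x = u ++ v ++ w ∧ y = u ++ v ++ v ++ w

section Counting

variable {α : Type*} [Fintype α]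

lemma List.ncard_setOf_length_eq (n : ℕ) :
    {l : List α | l.length = n}.ncard = Fintype.card α ^ n := by
  rw [← Nat.card_coe_set_eq, ← card_vector, ← Nat.card_eq_fintype_card]
  rfl

lemma ncard_length_eq_le_card_pow (S : Set (List α)) (n : ℕ) :
    {x ∈ S | x.length = n}.ncard ≤ Fintype.card α ^ n := by
  rw [← List.ncard_setOf_length_eq]
  exact Set.ncard_le_ncard (fun _ hx ↦ hx.2) (List.finite_length_eq α n)

lemma card_pow_le_ncard_length_eq {S : Set (List α)} {p q : List α}
    (hS : ∀ l, p ++ l ++ q ∈ S) (m : ℕ) :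
    Fintype.card α ^ m ≤ {x ∈ S | x.length = m + (p.length + q.length)}.ncard := by
  rw [← List.ncard_setOf_length_eq]
  refine Set.ncard_le_ncard_of_injOn (fun l ↦ p ++ l ++ q) ?_ ?_
    ((List.finite_length_eq α _).subset fun _ hx ↦ hx.2)
  · rintro l (hl : l.length = m)
    exact ⟨hS l, by simp only [List.length_append, hl]; omega⟩
  · intro l _ l' _ h
    simpa using h

theorem cap_eq_logb_card_of_forall_append_mem [Nonempty α] {S : Set (List α)} {p q : List α}
    (hS : ∀ l, p ++ l ++ q ∈ S) : cap S = Real.logb 2 (Fintype.card α) := by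
  set c := p.length + q.length
  set L := Real.logb 2 (Fintype.card α)
  have bounds : ∀ n ≥ c, ((n : ℝ) - c) * L ≤ Real.logb 2 ({x ∈ S | x.length = n}.ncard)
      ∧ Real.logb 2 ({x ∈ S | x.length = n}.ncard) ≤ n * L := by
    intro n hn
    have lower := card_pow_le_ncard_length_eq hS (n - c)
    rw [Nat.sub_add_cancel hn] at lower
    have lower' : (Fintype.card α : ℝ) ^ (n - c) ≤ {x ∈ S | x.length = n}.ncard := by
      exact_mod_cast lower
    have upper : ({x ∈ S | x.length = n}.ncard : ℝ) ≤ Fintype.card α ^ n := by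
      exact_mod_cast ncard_length_eq_le_card_pow S n
    have hpos : (0 : ℝ) < Fintype.card α ^ (n - c) := by positivity
    constructor
    · calc ((n : ℝ) - c) * L = Real.logb 2 ((Fintype.card α : ℝ) ^ (n - c)) := by
            rw [Real.logb_pow, Nat.cast_sub hn]
        _ ≤ _ := Real.logb_le_logb_of_le one_lt_two hpos lower'
    · calc _ ≤ Real.logb 2 ((Fintype.card α : ℝ) ^ n) :=
            Real.logb_le_logb_of_le one_lt_two (hpos.trans_le lower') upper
        _ = n * L := Real.logb_pow _ _ _
  have hlim : Tendsto (fun n : ℕ ↦ L - c * L / n) atTop (nhds L) := by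
    simpa using tendsto_const_nhds.sub (tendsto_const_div_atTop_nhds_zero_nat ((c : ℝ) * L))
  refine (tendsto_of_tendsto_of_tendsto_of_le_of_le' hlim tendsto_const_nhds ?_ ?_).limsup_eq
  · filter_upwards [eventually_ge_atTop (c + 1)] with n hn
    have hn0 : (0 : ℝ) < n := by exact_mod_cast (by omega : 0 < n)
    rw [le_div_iff₀ hn0]
    calc (L - c * L / n) * n = (n - c) * L := by field_simp
      _ ≤ _ := (bounds n (by omega)).1
  · filter_upwards [eventually_ge_atTop (c + 1)] with n hn
    have hn0 : (0 : ℝ) < n := by exact_mod_cast (by omega : 0 < n)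
    rw [div_le_iff₀ hn0, mul_comm]
    exact (bounds n (by omega)).2

end Counting

lemma List.exists_append_cons_cons_ne {α : Type*} {l : List α} {a b : α} (ha : a ∈ l)
    (hb : b ∈ l) (hab : a ≠ b) : ∃ p x y q, x ≠ y ∧ l = p ++ x :: y :: q := by
  by_contra! h
  have hchain : l.IsChain (· = ·) := List.isChain_iff_forall_rel_of_append_cons_cons.mpr
    fun x y p q hl ↦ by_contra fun hxy ↦ h p x y q hxy hl
  obtain ⟨c, t, rfl⟩ := List.exists_cons_of_ne_nil (List.ne_nil_of_mem ha)
  rw [List.isChain_eq_iff_eq_replicate.mp hchain c rfl] at ha hb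
  exact hab ((List.eq_of_mem_replicate ha).trans (List.eq_of_mem_replicate hb).symm)

section Reachability

variable {α : Type*}

lemma TanGeStep.reflTransGen_append {k : ℕ} {x y : List α}
    (h : Relation.ReflTransGen (TanGeStep k) x y) (p q : List α) :
    Relation.ReflTransGen (TanGeStep k) (p ++ x ++ q) (p ++ y ++ q) := by
  refine Relation.ReflTransGen.lift (fun l ↦ p ++ l ++ q) ?_ _ _ h
  rintro _ _ ⟨u, v, w, hv, rfl, rfl⟩
  exact ⟨p ++ u, v, w ++ q, hv, by simp, by simp⟩

lemma tanGeStep_one_append_cons (u v : List α) (a : α) :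
    TanGeStep 1 (u ++ a :: v) (u ++ a :: a :: v) :=
  ⟨u, [a], v, le_rfl, by simp, by simp⟩

lemma tanGeStep_append_self {k : ℕ} {u : List α} (hu : k ≤ u.length) :
    TanGeStep k u (u ++ u) :=
  ⟨[], u, [], hu, by simp, by simp⟩

end Reachability

theorem reflTransGen_tanGeStep_one_pair (x : Bool) (f : List Bool) :
    Relation.ReflTransGen (TanGeStep 1) [x, !x] (x :: (f ++ [!x])) :=
  match f with
  | [] => .refl
  | b :: f => by
    rcases b.eq_or_eq_not x with hb | hb <;> subst b
    · exact (reflTransGen_tanGeStep_one_pair x f).tail (tanGeStep_one_append_cons [] _ x)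
    · match f with
      | [] => exact .single (tanGeStep_one_append_cons [x] [] (!x))
      | c :: f =>
        rcases c.eq_or_eq_not x with hc | hc <;> subst c
        · refine .head (tanGeStep_append_self (u := [x, !x]) (by simp)) ?_
          simpa using TanGeStep.reflTransGen_append (reflTransGen_tanGeStep_one_pair x f) [x, !x] []
        · exact (reflTransGen_tanGeStep_one_pair x ((!x) :: f)).tail
            (tanGeStep_one_append_cons [x] (f ++ [!x]) (!x))
termination_by f.length

theorem stmt7 (s : List Bool) (h0 : false ∈ s) (h1 : true ∈ s) :
    cap (Sys (TanGeStep 1) s) = 1 := by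
  obtain ⟨p, x, y, q, hxy, rfl⟩ := List.exists_append_cons_cons_ne h0 h1 Bool.false_ne_true
  obtain rfl : y = !x := (y.eq_or_eq_not x).resolve_left hxy.symm
  have hS : ∀ l, (p ++ [x]) ++ l ++ ((!x) :: q) ∈ Sys (TanGeStep 1) (p ++ x :: (!x) :: q) :=
    fun l ↦ by
      simpa [Sys] using TanGeStep.reflTransGen_append (reflTransGen_tanGeStep_one_pair x l) p q
  rw [cap_eq_logb_card_of_forall_append_mem hS, Fintype.card_bool, Nat.cast_ofNat,
    Real.logb_self_eq_one one_lt_two]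
end

section
/- Let k ≥ 1 and s ∈ Σ* with |s| ≥ k and δ(s) ≥ 2. For S^tan_{≥k} = (Σ, s, T^tan_{≥k}), cap(S^tan_{≥k}) ≥ log₂ r > 0, where r is the largest real root of f(x) = x^{k+1} − x − 1. -/
/-!
Write `s = p ++ a :: b :: q` with `a ≠ b`. One duplication turns `s` into `s ++ s`, which contains
the factor `d = a :: c` with `c = (b :: q ++ s).take k`. Duplicating either the `c` at the end of
`d` or `d` itself inserts a block `c` or `d` right after `d`, so every concatenation of such blocks
can be grown there. The blocks start with the different letters `b` and `a`, so distinct block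
sequences give distinct words. Hence the system has at least as many words of length `2|s| + M` as
there are compositions of `M` into parts `k` and `k + 1`. Their number `N M` satisfies
`N (M + k + 1) ≥ N (M + 1) + N M`, so it grows like `r ^ M` because `r ^ (k + 1) = r + 1`.
-/

open Filter

lemma ncard_length_eq_le {A : Type*} [Fintype A] (S : Set (List A)) (n : ℕ) :
    {x ∈ S | x.length = n}.ncard ≤ Fintype.card A ^ n := by
  calc {x ∈ S | x.length = n}.ncard ≤ {x : List A | x.length = n}.ncard :=
        Set.ncard_le_ncard (fun x hx => hx.2) (List.finite_length_eq A n)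
    _ = Fintype.card A ^ n := by
        rw [← Nat.card_coe_set_eq, ← card_vector n, ← Nat.card_eq_fintype_card]
        rfl

lemma logb_le_cap {A : Type*} [Fintype A] {S : Set (List A)} {r C : ℝ} (hr : 0 < r)
    (h : ∀ᶠ n : ℕ in atTop, r ^ n ≤ C * {x ∈ S | x.length = n}.ncard) :
    Real.logb 2 r ≤ cap S := by
  set N : ℕ → ℕ := fun n => {x ∈ S | x.length = n}.ncard
  -- `limsup` on `ℝ` is a junk value unless the sequence is bounded above.
  have hbdd : IsBoundedUnder (· ≤ ·) atTop fun n : ℕ => Real.logb 2 (N n) / n := by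
    refine isBoundedUnder_of_eventually_le (a := Real.logb 2 (Fintype.card A)) ?_
    filter_upwards [eventually_gt_atTop 0] with n hn
    have hn' : (0 : ℝ) < n := by exact_mod_cast hn
    rw [div_le_iff₀ hn', mul_comm, ← Real.logb_pow]
    rcases (N n).eq_zero_or_pos with h0 | hpos
    · rw [h0, Nat.cast_zero, Real.logb_zero]
      exact div_nonneg (by exact_mod_cast Real.log_natCast_nonneg (Fintype.card A ^ n))
        (Real.log_nonneg one_le_two)
    · exact Real.logb_le_logb_of_le one_lt_two (by exact_mod_cast hpos)
        (by exact_mod_cast ncard_length_eq_le S n)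
  have hlim : Tendsto (fun n : ℕ => Real.logb 2 r - Real.logb 2 C / n) atTop
      (nhds (Real.logb 2 r)) := by
    simpa using tendsto_const_nhds.sub (tendsto_const_div_atTop_nhds_zero_nat (Real.logb 2 C))
  have hle : (fun n : ℕ => Real.logb 2 r - Real.logb 2 C / n) ≤ᶠ[atTop]
      fun n => Real.logb 2 (N n) / n := by
    filter_upwards [h, eventually_gt_atTop 0] with n hn hn0
    have hn' : (0 : ℝ) < n := by exact_mod_cast hn0
    have hCN : 0 < C * N n := (pow_pos hr n).trans_le hn
    have hN : (0 : ℝ) < N n := by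
      rcases (N n).eq_zero_or_pos with h0 | hpos
      · simp [h0] at hCN
      · exact_mod_cast hpos
    have hC : 0 < C := pos_of_mul_pos_left hCN hN.le
    have hlog : n * Real.logb 2 r ≤ Real.logb 2 C + Real.logb 2 (N n) := by
      rw [← Real.logb_pow, ← Real.logb_mul hC.ne' hN.ne']
      exact Real.logb_le_logb_of_le one_lt_two (pow_pos hr n) hn
    rw [sub_le_iff_le_add, ← add_div, le_div_iff₀ hn']
    linarith
  calc Real.logb 2 r = limsup (fun n : ℕ => Real.logb 2 r - Real.logb 2 C / n) atTop :=
        hlim.limsup_eq.symm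
    _ ≤ cap S := limsup_le_limsup hle hlim.isCoboundedUnder_le hbdd

/-- A Boolean list stands for a composition into parts `k` (`false`) and `k + 1` (`true`). -/
def blockWeight (k : ℕ) (L : List Bool) : ℕ := (L.map (cond · (k + 1) k)).sum

def blockWords (k M : ℕ) : Set (List Bool) := {L | blockWeight k L = M}

namespace blockWeight

variable {k : ℕ}

@[simp] lemma cons (b : Bool) (L : List Bool) :
    blockWeight k (b :: L) = cond b (k + 1) k + blockWeight k L := rfl

lemma append (L L' : List Bool) :
    blockWeight k (L ++ L') = blockWeight k L + blockWeight k L' := by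
  simp [blockWeight]

lemma replicate (n : ℕ) (b : Bool) :
    blockWeight k (List.replicate n b) = n * cond b (k + 1) k := by
  simp [blockWeight, List.sum_replicate]

lemma length_le (hk : 1 ≤ k) (L : List Bool) : L.length ≤ blockWeight k L := by
  induction L with
  | nil => simp
  | cons b L ih => cases b <;> simp <;> omega

end blockWeight

namespace blockWords

variable {k : ℕ}

lemma finite (hk : 1 ≤ k) (M : ℕ) : (blockWords k M).Finite :=
  (List.finite_length_le Bool M).subset fun L hL => (blockWeight.length_le hk L).trans_eq hL

lemma nonempty (hk : 1 ≤ k) {M : ℕ} (hM : k * k ≤ M) : (blockWords k M).Nonempty := by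
  obtain ⟨c, hc⟩ : ∃ c, M / k = M % k + c :=
    Nat.exists_eq_add_of_le ((Nat.mod_lt M hk).le.trans ((Nat.le_div_iff_mul_le hk).mpr hM))
  refine ⟨List.replicate (M % k) true ++ List.replicate c false, ?_⟩
  have hdiv := Nat.div_add_mod M k
  rw [hc] at hdiv
  simp only [blockWords, Set.mem_ofPred_eq, blockWeight.append, blockWeight.replicate, cond_true,
    cond_false]
  linarith

lemma ncard_add_ncard_le (hk : 1 ≤ k) (M : ℕ) :
    (blockWords k (M + 1)).ncard + (blockWords k M).ncard ≤
      (blockWords k (M + k + 1)).ncard := by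
  have hfalse : List.cons false '' blockWords k (M + 1) ⊆ blockWords k (M + k + 1) := by
    rintro _ ⟨L, hL, rfl⟩
    simp only [blockWords, Set.mem_ofPred_eq, blockWeight.cons, cond_false] at hL ⊢
    omega
  have htrue : List.cons true '' blockWords k M ⊆ blockWords k (M + k + 1) := by
    rintro _ ⟨L, hL, rfl⟩
    simp only [blockWords, Set.mem_ofPred_eq, blockWeight.cons, cond_true] at hL ⊢
    omega
  have hdisj :
      Disjoint (List.cons false '' blockWords k (M + 1)) (List.cons true '' blockWords k M) := by
    rw [Set.disjoint_left]
    rintro _ ⟨L, -, rfl⟩ ⟨L', -, h⟩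
    simp at h
  rw [← Set.ncard_image_of_injective _ List.cons_injective,
    ← Set.ncard_image_of_injective (blockWords k M) List.cons_injective,
    ← Set.ncard_union_eq hdisj ((finite hk _).image _) ((finite hk _).image _)]
  exact Set.ncard_le_ncard (Set.union_subset hfalse htrue) (finite hk _)

lemma pow_le_ncard (hk : 1 ≤ k) {r : ℝ} (hr : 1 ≤ r) (hroot : r ^ (k + 1) = r + 1) :
    ∀ M, k * k ≤ M → r ^ M ≤ r ^ (k * k + k) * (blockWords k M).ncard := by
  intro M
  induction M using Nat.strong_induction_on with
  | _ M ih =>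
    intro hM
    by_cases hMs : M ≤ k * k + k
    · have hpos : (1 : ℝ) ≤ (blockWords k M).ncard := by
        exact_mod_cast (Set.ncard_pos (finite hk M)).mpr (nonempty hk hM)
      calc r ^ M ≤ r ^ (k * k + k) := pow_le_pow_right₀ hr hMs
        _ ≤ r ^ (k * k + k) * (blockWords k M).ncard :=
          le_mul_of_one_le_right (by positivity) hpos
    · obtain ⟨M, rfl⟩ : ∃ M', M = M' + k + 1 := ⟨M - k - 1, by omega⟩
      have hrec : ((blockWords k (M + 1)).ncard : ℝ) + (blockWords k M).ncard ≤
          (blockWords k (M + k + 1)).ncard := by exact_mod_cast ncard_add_ncard_le hk M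
      calc r ^ (M + k + 1) = r ^ (M + 1) + r ^ M := by rw [add_assoc, pow_add, hroot]; ring
        _ ≤ r ^ (k * k + k) * ((blockWords k (M + 1)).ncard + (blockWords k M).ncard) := by
          rw [mul_add]
          exact add_le_add (ih (M + 1) (by omega) (by omega)) (ih M (by omega) (by omega))
        _ ≤ r ^ (k * k + k) * (blockWords k (M + k + 1)).ncard := by gcongr

end blockWords

section BlockCode

variable {A : Type*}

def blockCode (d c : List A) (L : List Bool) : List A := (L.map (cond · d c)).flatten

@[simp] lemma blockCode_nil (d c : List A) : blockCode d c [] = [] := rfl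

@[simp] lemma blockCode_cons (d c : List A) (b : Bool) (L : List Bool) :
    blockCode d c (b :: L) = cond b d c ++ blockCode d c L := rfl

lemma blockCode_injective {a b : A} (hab : a ≠ b) (u v : List A) :
    Function.Injective (blockCode (a :: u) (b :: v)) := by
  intro L₁
  induction L₁ with
  | nil =>
    rintro (_ | ⟨t, L₂⟩) h
    · rfl
    · cases t <;> simp at h
  | cons t₁ L₁ ih =>
    rintro (_ | ⟨t₂, L₂⟩) h
    · cases t₁ <;> simp at h
    · obtain rfl : t₁ = t₂ := by
        cases t₁ <;> cases t₂ <;> simp_all [eq_comm]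
      simp only [blockCode_cons, List.append_cancel_left_eq] at h
      rw [ih h]

lemma length_blockCode {a : A} {c : List A} {k : ℕ} (hc : c.length = k) (L : List Bool) :
    (blockCode (a :: c) c L).length = blockWeight k L := by
  induction L with
  | nil => rfl
  | cons t L ih => cases t <;> simp [ih, hc, Nat.add_right_comm]

end BlockCode

theorem List.exists_adjacent_ne_of_two_le_card_toFinset {A : Type*} [DecidableEq A]
    {s : List A} (hs : 2 ≤ s.toFinset.card) : ∃ p a b q, s = p ++ a :: b :: q ∧ a ≠ b := by
  by_contra! h
  have hchain : s.IsChain (· = ·) := List.isChain_iff_forall_rel_of_append_cons_cons.mpr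
    fun a b p q hs => h p a b q hs
  obtain _ | ⟨a, t⟩ := s
  · simp at hs
  · have hsub : (a :: t).toFinset ⊆ {a} := by
      intro x hx
      rw [List.mem_toFinset, List.isChain_cons_eq_iff_eq_replicate.mp hchain, List.mem_cons,
        List.mem_replicate] at hx
      exact Finset.mem_singleton.mpr (hx.elim id (·.2))
    have := (Finset.card_le_card hsub).trans_eq (Finset.card_singleton a)
    omega

theorem List.exists_append_self_eq_of_two_le_card_toFinset {A : Type*} [DecidableEq A]
    {k : ℕ} (hk : 1 ≤ k) {s : List A} (hs : k ≤ s.length) (hd : 2 ≤ s.toFinset.card) :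
    ∃ P R : List A, ∃ a b : A, ∃ t : List A,
      a ≠ b ∧ (b :: t).length = k ∧ s ++ s = P ++ a :: b :: t ++ R := by
  obtain ⟨p, a, b, q, rfl, hab⟩ := List.exists_adjacent_ne_of_two_le_card_toFinset hd
  refine ⟨p, (q ++ p ++ a :: b :: q).drop (k - 1), a, b, (q ++ p ++ a :: b :: q).take (k - 1),
    hab, ?_, by simp⟩
  simp only [List.length_append, List.length_cons, List.length_take] at hs ⊢
  omega

namespace TanGeStep

variable {A : Type*} {k : ℕ}

lemma reflTransGen_append_self {s : List A} (hs : k ≤ s.length) :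
    Relation.ReflTransGen (TanGeStep k) s (s ++ s) :=
  .single ⟨[], s, [], hs, by simp, by simp⟩

lemma reflTransGen_blockCode {a : A} {c : List A} (hc : k ≤ c.length) {x P R : List A}
    (h : Relation.ReflTransGen (TanGeStep k) x (P ++ a :: c ++ R)) (L : List Bool) :
    Relation.ReflTransGen (TanGeStep k) x (P ++ a :: c ++ blockCode (a :: c) c L ++ R) := by
  induction L with
  | nil => simpa using h
  | cons t L ih =>
    refine ih.tail ?_
    cases t
    · exact ⟨P ++ [a], c, blockCode (a :: c) c L ++ R, hc, by simp, by simp⟩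
    · exact ⟨P, a :: c, blockCode (a :: c) c L ++ R, by simp; omega, by simp, by simp⟩

lemma ncard_blockWords_le [Finite A] [DecidableEq A] (hk : 1 ≤ k) {s : List A}
    (hs : k ≤ s.length) (hd : 2 ≤ s.toFinset.card) (M : ℕ) :
    (blockWords k M).ncard ≤ {x ∈ Sys (TanGeStep k) s | x.length = 2 * s.length + M}.ncard := by
  obtain ⟨P, R, a, b, t, hab, hc, hss⟩ :=
    List.exists_append_self_eq_of_two_le_card_toFinset hk hs hd
  set embed : List Bool → List A :=
    fun L => P ++ a :: b :: t ++ blockCode (a :: b :: t) (b :: t) L ++ R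
  have hinj : embed.Injective := fun L₁ L₂ h =>
    blockCode_injective hab (b :: t) t (List.append_cancel_left (List.append_cancel_right h))
  have hmaps :
      embed '' blockWords k M ⊆ {x ∈ Sys (TanGeStep k) s | x.length = 2 * s.length + M} := by
    rintro _ ⟨L, hL, rfl⟩
    refine ⟨reflTransGen_blockCode hc.ge (hss ▸ reflTransGen_append_self hs) L, ?_⟩
    have hlen := congrArg List.length hss
    simp only [embed, List.length_append, List.length_cons, length_blockCode hc] at hlen ⊢
    rw [hL]
    omega
  rw [← Set.ncard_image_of_injective _ hinj]
  exact Set.ncard_le_ncard hmaps ((List.finite_length_eq A _).subset fun x hx => hx.2)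

end TanGeStep

lemma exists_root_gt_one {k : ℕ} (hk : 1 ≤ k) :
    ∃ t : ℝ, 1 < t ∧ t ^ (k + 1) - t - 1 = 0 := by
  have hcont : ContinuousOn (fun x : ℝ => x ^ (k + 1) - x - 1) (Set.Icc 1 2) := by fun_prop
  have h2 : (4 : ℝ) ≤ 2 ^ (k + 1) :=
    calc (4 : ℝ) = 2 ^ 2 := by norm_num
      _ ≤ 2 ^ (k + 1) := pow_le_pow_right₀ one_le_two (by omega)
  obtain ⟨t, ht, ht0⟩ := intermediate_value_Ioo one_le_two hcont
    (show (0 : ℝ) ∈ Set.Ioo _ _ from ⟨by norm_num, by linarith⟩)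
  exact ⟨t, ht.1, ht0⟩

theorem stmt8 {A : Type*} [Fintype A] [DecidableEq A] (k : ℕ) (hk : 1 ≤ k)
    (s : List A) (hs : k ≤ s.length) (hd : 2 ≤ s.toFinset.card) (r : ℝ)
    (hroot : r ^ (k + 1) - r - 1 = 0)
    (hmax : ∀ t : ℝ, t ^ (k + 1) - t - 1 = 0 → t ≤ r) :
    Real.logb 2 r ≤ cap (Sys (TanGeStep k) s) ∧ 0 < Real.logb 2 r := by
  obtain ⟨t, ht, ht_root⟩ := exists_root_gt_one hk
  have hr : 1 < r := ht.trans_le (hmax t ht_root)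
  refine ⟨logb_le_cap (C := r ^ (2 * s.length + (k * k + k))) (by linarith) ?_,
    Real.logb_pos one_lt_two hr⟩
  filter_upwards [eventually_ge_atTop (2 * s.length + k * k)] with n hn
  obtain ⟨M, rfl⟩ := Nat.exists_eq_add_of_le (show 2 * s.length ≤ n by omega)
  have hwords := blockWords.pow_le_ncard hk hr.le (by linarith) M (by omega)
  have hcount : ((blockWords k M).ncard : ℝ) ≤
      {x ∈ Sys (TanGeStep k) s | x.length = 2 * s.length + M}.ncard := by
    exact_mod_cast TanGeStep.ncard_blockWords_le hk hs hd M
  calc r ^ (2 * s.length + M) = r ^ (2 * s.length) * r ^ M := pow_add r _ M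
    _ ≤ r ^ (2 * s.length) * (r ^ (k * k + k) * (blockWords k M).ncard) := by gcongr
    _ ≤ r ^ (2 * s.length + (k * k + k)) *
          {x ∈ Sys (TanGeStep k) s | x.length = 2 * s.length + M}.ncard := by
      rw [pow_add r (2 * s.length), mul_assoc]
      gcongr
end

section
/- The language S = s·rev(s)·{s, rev(s)}* (all concatenations of blocks s and rev(s) beginning with s rev(s)) is contained in the reversed-tandem-replication system S^rt_k(s), where s ∈ Σ^k; moreover if s ≠ rev(s) this language has exactly 2^{m−2} words of length mk for each m ≥ 2. -/
/-!
Replicating the block `rev(s)` at position `|s|`, resp. the block `s` at position `0`, turns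
`s rev(s) t` into `s rev(s) s t`, resp. `s rev(s) rev(s) t`; so every word of the language is
built from `s` by inserting its blocks right behind the prefix `s rev(s)`, last block first.
If `s ≠ rev(s)`, the two blocks are distinct words of the same length `k > 0`, hence a word of
length `m k` in the language determines its `m - 2` blocks, which are coded by a Boolean word.
-/

open Filter

def RtStep {A : Type*} (k : ℕ) (x y : List A) : Prop :=
  ∃ u v w : List A, v.length = k ∧ x = u ++ v ++ w ∧ y = u ++ v ++ v.reverse ++ w

open List Function

theorem List.length_flatten_of_forall_length_eq {α : Type*} {k : ℕ} :
    ∀ {L : List (List α)}, (∀ b ∈ L, b.length = k) → L.flatten.length = L.length * k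
  | [], _ => by simp
  | b :: L, h => by
    simp [length_flatten_of_forall_length_eq fun c hc => h c (mem_cons_of_mem _ hc),
      h b mem_cons_self, Nat.succ_mul, Nat.add_comm]

theorem List.flatten_map_inj_of_length_eq {ι α : Type*} {k : ℕ} {g : ι → List α}
    (hg : Injective g) (hlen : ∀ i, (g i).length = k) :
    ∀ {l₁ l₂ : List ι}, l₁.length = l₂.length →
      (l₁.map g).flatten = (l₂.map g).flatten → l₁ = l₂
  | [], [], _, _ => rfl
  | i :: l₁, j :: l₂, h, h' => by
    simp only [map_cons, flatten_cons] at h'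
    obtain ⟨hij, htail⟩ := append_inj h' (by rw [hlen, hlen])
    rw [hg hij, flatten_map_inj_of_length_eq hg hlen (Nat.succ.inj h) htail]

section ReversedTandemReplication

variable {A : Type*} {k : ℕ} {s : List A}

def blockLanguage (s : List A) : Set (List A) :=
  {x | ∃ l : List (List A), (∀ b ∈ l, b = s ∨ b = s.reverse) ∧ x = s ++ s.reverse ++ l.flatten}

theorem rtStep_append_block (hs : s.length = k) {b : List A} (hb : b = s ∨ b = s.reverse)
    (t : List A) : RtStep k (s ++ s.reverse ++ t) (s ++ s.reverse ++ b ++ t) := by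
  rcases hb with rfl | rfl
  · exact ⟨b, b.reverse, t, by simp [hs], by simp, by simp⟩
  · exact ⟨[], s, s.reverse ++ t, hs, by simp, by simp⟩

theorem append_flatten_mem_sys_rtStep (hs : s.length = k) :
    ∀ {l : List (List A)}, (∀ b ∈ l, b = s ∨ b = s.reverse) →
      s ++ s.reverse ++ l.flatten ∈ Sys (RtStep k) s
  | [], _ => .single ⟨[], s, [], hs, by simp, by simp⟩
  | b :: l, hl => by
    have hstep := rtStep_append_block hs (hl b mem_cons_self) l.flatten
    simpa [Sys] using
      (append_flatten_mem_sys_rtStep hs fun c hc => hl c (mem_cons_of_mem _ hc)).tail hstep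

theorem blockLanguage_subset_sys_rtStep (hs : s.length = k) :
    blockLanguage s ⊆ Sys (RtStep k) s := by
  rintro _ ⟨l, hl, rfl⟩
  exact append_flatten_mem_sys_rtStep hs hl

def tandemBlock (s : List A) (b : Bool) : List A :=
  cond b s s.reverse

theorem tandemBlock_injective (hsr : s ≠ s.reverse) : Injective (tandemBlock s) := by
  intro a b h; cases a <;> cases b <;> simp_all [tandemBlock, eq_comm]

theorem length_tandemBlock (b : Bool) : (tandemBlock s b).length = s.length := by
  cases b <;> simp [tandemBlock]

theorem length_flatten_map_tandemBlock (c : List Bool) :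
    (c.map (tandemBlock s)).flatten.length = c.length * s.length := by
  rw [length_flatten_of_forall_length_eq (forall_mem_map.2 fun b _ => length_tandemBlock b),
    length_map]

theorem blocks_iff_exists_map_tandemBlock {l : List (List A)} :
    (∀ b ∈ l, b = s ∨ b = s.reverse) ↔ ∃ c : List Bool, c.map (tandemBlock s) = l := by
  rw [← Set.mem_range, Set.range_list_map]
  simp only [Set.mem_ofPred_eq, Set.mem_range, Bool.exists_bool, tandemBlock, cond_false,
    cond_true]
  exact forall₂_congr fun b _ => by rw [or_comm]; exact or_congr eq_comm eq_comm

theorem blockLanguage_length_eq_range (hs : s.length = k) (hk : 0 < k) (n : ℕ) :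
    {x ∈ blockLanguage s | x.length = (n + 2) * k} =
      Set.range fun v : List.Vector Bool n =>
        s ++ s.reverse ++ (v.toList.map (tandemBlock s)).flatten := by
  ext x
  simp only [blockLanguage, Set.mem_ofPred_eq, Set.mem_range, blocks_iff_exists_map_tandemBlock]
  constructor
  · rintro ⟨⟨_, ⟨c, rfl⟩, rfl⟩, hx⟩
    have hc : c.length = n := by
      simp only [length_append, length_reverse, length_flatten_map_tandemBlock, hs] at hx
      nlinarith
    exact ⟨⟨c, hc⟩, rfl⟩
  · rintro ⟨v, rfl⟩
    refine ⟨⟨_, ⟨v.toList, rfl⟩, rfl⟩, ?_⟩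
    simp only [length_append, length_reverse, length_flatten_map_tandemBlock, hs,
      List.Vector.toList_length]
    ring

theorem ncard_blockLanguage_length_eq (hs : s.length = k) (hsr : s ≠ s.reverse) (n : ℕ) :
    {x ∈ blockLanguage s | x.length = (n + 2) * k}.ncard = 2 ^ n := by
  have hk : 0 < k := by
    rw [← hs, length_pos_iff]
    rintro rfl
    exact hsr rfl
  have hinj : Injective fun v : List.Vector Bool n =>
      s ++ s.reverse ++ (v.toList.map (tandemBlock s)).flatten :=
    fun v w h => List.Vector.toList_injective <|
      flatten_map_inj_of_length_eq (tandemBlock_injective hsr) length_tandemBlock (by simp)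
        (append_cancel_left h)
  rw [blockLanguage_length_eq_range hs hk, Set.ncard_range_of_injective hinj,
    Nat.card_eq_fintype_card, card_vector, Fintype.card_bool]

end ReversedTandemReplication

theorem stmt11_general {A : Type*} (k : ℕ)
    (s : List A) (hs : s.length = k) :
    ({x : List A | ∃ l : List (List A),
        (∀ b ∈ l, b = s ∨ b = s.reverse) ∧ x = s ++ s.reverse ++ l.flatten} : Set (List A))
      ⊆ Sys (RtStep k) s ∧
    (s ≠ s.reverse → ∀ m : ℕ, 2 ≤ m →
      ({x : List A | (∃ l : List (List A),
          (∀ b ∈ l, b = s ∨ b = s.reverse) ∧ x = s ++ s.reverse ++ l.flatten) ∧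
          x.length = m * k} : Set (List A)).ncard = 2 ^ (m - 2)) := by
  refine ⟨blockLanguage_subset_sys_rtStep hs, fun hsr m hm => ?_⟩
  obtain ⟨n, rfl⟩ := Nat.exists_eq_add_of_le' hm
  rw [Nat.add_sub_cancel]
  exact ncard_blockLanguage_length_eq hs hsr n

theorem stmt11 {A : Type*} [Fintype A] [DecidableEq A] (k : ℕ)
    (s : List A) (hs : s.length = k) :
    ({x : List A | ∃ l : List (List A),
        (∀ b ∈ l, b = s ∨ b = s.reverse) ∧ x = s ++ s.reverse ++ l.flatten} : Set (List A))
      ⊆ Sys (RtStep k) s ∧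
    (s ≠ s.reverse → ∀ m : ℕ, 2 ≤ m →
      ({x : List A | (∃ l : List (List A),
          (∀ b ∈ l, b = s ∨ b = s.reverse) ∧ x = s ++ s.reverse ++ l.flatten) ∧
          x.length = m * k} : Set (List A)).ncard = 2 ^ (m - 2)) :=
  stmt11_general k s hs
end

section
/- Let s ∈ Σ^k with s = rev(s), and let N(n) = |S^rt_k(s) ∩ Σⁿ|. Then for all positive integers p, q: N(pqk) ≥ N(pk)^q. -/
open Filter

/-! The system `S = Sys (RtStep k) s` is closed under concatenation: since `s` is a palindrome of
length `k`, one step turns `s` into `s ++ s`, and the derivations `s →* x` and `s →* y` can then be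
run inside the two halves. Concatenating words of lengths `a` and `b` is injective, so
`N a * N b ≤ N (a + b)`, and iterating this `q` times gives `N (p k) ^ q ≤ N (p q k)`. -/

section Supermultiplicative

variable {α : Type*} [Finite α] {S : Set (List α)}

theorem ncard_length_eq_mul_le_of_append_mem (hS : ∀ x ∈ S, ∀ y ∈ S, x ++ y ∈ S) (a b : ℕ) :
    ({x ∈ S | x.length = a} : Set (List α)).ncard * ({x ∈ S | x.length = b} : Set (List α)).ncard ≤
      ({x ∈ S | x.length = a + b} : Set (List α)).ncard := by
  set Sa := ({x ∈ S | x.length = a} : Set (List α))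
  set Sb := ({x ∈ S | x.length = b} : Set (List α))
  have hinj : (Sa ×ˢ Sb).InjOn fun z => z.1 ++ z.2 := by
    rintro ⟨x₁, y₁⟩ ⟨⟨-, hx₁⟩, -⟩ ⟨x₂, y₂⟩ ⟨⟨-, hx₂⟩, -⟩ h
    obtain ⟨rfl, rfl⟩ := List.append_inj h (hx₁.trans hx₂.symm)
    rfl
  have hsub : (fun z : List α × List α => z.1 ++ z.2) '' (Sa ×ˢ Sb) ⊆
      {x ∈ S | x.length = a + b} := by
    rintro _ ⟨⟨x, y⟩, ⟨⟨hxS, hx⟩, ⟨hyS, hy⟩⟩, rfl⟩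
    exact ⟨hS x hxS y hyS, by simp [hx, hy]⟩
  calc Sa.ncard * Sb.ncard = ((fun z : List α × List α => z.1 ++ z.2) '' (Sa ×ˢ Sb)).ncard := by
        rw [hinj.ncard_image, Set.ncard_prod]
    _ ≤ _ := Set.ncard_le_ncard hsub ((List.finite_length_eq α (a + b)).subset fun _ hx => hx.2)

theorem ncard_length_eq_pow_le_of_append_mem (hS : ∀ x ∈ S, ∀ y ∈ S, x ++ y ∈ S) (a : ℕ)
    {q : ℕ} (hq : 1 ≤ q) :
    ({x ∈ S | x.length = a} : Set (List α)).ncard ^ q ≤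
      ({x ∈ S | x.length = q * a} : Set (List α)).ncard := by
  induction q, hq using Nat.le_induction with
  | base => simp
  | succ q _ ih =>
    calc _ = ({x ∈ S | x.length = a} : Set (List α)).ncard ^ q *
          ({x ∈ S | x.length = a} : Set (List α)).ncard := pow_succ _ _
      _ ≤ ({x ∈ S | x.length = q * a} : Set (List α)).ncard *
          ({x ∈ S | x.length = a} : Set (List α)).ncard := Nat.mul_le_mul_right _ ih
      _ ≤ _ := by
        rw [Nat.succ_mul]
        exact ncard_length_eq_mul_le_of_append_mem hS _ _

end Supermultiplicative

section RtStep

variable {A : Type*} {k : ℕ}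

theorem RtStep.append_left {x y : List A} (h : RtStep k x y) (z : List A) :
    RtStep k (z ++ x) (z ++ y) := by
  obtain ⟨u, v, w, hv, rfl, rfl⟩ := h
  exact ⟨z ++ u, v, w, hv, by simp, by simp⟩

theorem RtStep.append_right {x y : List A} (h : RtStep k x y) (z : List A) :
    RtStep k (x ++ z) (y ++ z) := by
  obtain ⟨u, v, w, hv, rfl, rfl⟩ := h
  exact ⟨u, v, w ++ z, hv, by simp, by simp⟩

theorem rtStep_self_append_self {s : List A} (hs : s.length = k) (hrev : s = s.reverse) :
    RtStep k s (s ++ s) :=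
  ⟨[], s, [], hs, by simp, by simp [← hrev]⟩

theorem append_mem_sys_rtStep {s : List A} (hs : s.length = k) (hrev : s = s.reverse)
    {x y : List A} (hx : x ∈ Sys (RtStep k) s) (hy : y ∈ Sys (RtStep k) s) :
    x ++ y ∈ Sys (RtStep k) s :=
  have hxs : Relation.ReflTransGen (RtStep k) (s ++ s) (x ++ s) :=
    hx.lift (· ++ s) fun _ _ h => h.append_right s
  have hxy : Relation.ReflTransGen (RtStep k) (x ++ s) (x ++ y) :=
    hy.lift (x ++ ·) fun _ _ h => h.append_left x
  ((Relation.ReflTransGen.single (rtStep_self_append_self hs hrev)).trans hxs).trans hxy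

end RtStep

theorem stmt16_general {A : Type*} [Fintype A] (k : ℕ)
    (s : List A) (hs : s.length = k) (hrev : s = s.reverse)
    (p q : ℕ) (hq : 1 ≤ q) :
    ({x ∈ Sys (RtStep k) s | x.length = p * k} : Set (List A)).ncard ^ q ≤
      ({x ∈ Sys (RtStep k) s | x.length = p * q * k} : Set (List A)).ncard := by
  have hpqk : p * q * k = q * (p * k) := by ring
  rw [hpqk]
  exact ncard_length_eq_pow_le_of_append_mem
    (fun _ hx _ hy => append_mem_sys_rtStep hs hrev hx hy) (p * k) hq

theorem stmt16 {A : Type*} [Fintype A] [DecidableEq A] (k : ℕ)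
    (s : List A) (hs : s.length = k) (hrev : s = s.reverse)
    (p q : ℕ) (hp : 1 ≤ p) (hq : 1 ≤ q) :
    ({x ∈ Sys (RtStep k) s | x.length = p * k} : Set (List A)).ncard ^ q ≤
      ({x ∈ Sys (RtStep k) s | x.length = p * q * k} : Set (List A)).ncard :=
  stmt16_general k s hs hrev p q hq
end
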